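/- arXiv:2011.09893 — 3 statements merged into one kernel-verified Lean document; each statement's English description precedes it below -/
import Mathlib

section
/- Let x ∈ B_ρ(x_0) satisfy F_i(x) = y^i for all i, let ‖y^{δ,i} − y^i‖ < δ^i, assume τ > 2(1+η)/(1−2η), and let n_*^δ be the termination index. If the iterates x_0,…,x_{n_*^δ} lie in B_ρ(x_0), then ‖x_{n+1} − x‖ ≤ ‖x_n − x‖ for all n = 0,…,n_*^δ. -/
open Metric Filter
open Fin.NatCast
open scoped InnerProductSpace InnerProduct

/-!
With `u = xₙ - x`, `s = F(xₙ) - y^δ` and `A = F'(xₙ)`, an active step replaces `u` by `u - A* s`,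
and `‖u - A* s‖ ≤ ‖u‖` as soon as `‖A* s‖² ≤ 2⟪u, A* s⟫ = 2⟪A u, s⟫`. Since `‖A‖ ≤ 1` it suffices
that `‖s‖² ≤ 2⟪A u, s⟫`. Now `A u = s + e - r` with the data error `e = y^δ - y` and the
linearisation error `r`, which the tangential cone condition bounds by `η ‖s + e‖`; the
discrepancy principle `τ δ < ‖s‖` together with the choice of `τ` makes `e` small enough
compared to `s` for the inequality to hold. For `η < 0` the cone condition forces `A = 0`.
-/

theorem noise_le_of_discrepancy {η τ δ a b : ℝ} (hη₀ : 0 ≤ η) (hη : η < 1 / 2)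
    (hτ : 2 * (1 + η) / (1 - 2 * η) < τ) (ha : a < δ) (hb : τ * δ < b) (ha₀ : 0 ≤ a) :
    2 * (1 + η) * a ≤ (1 - 2 * η) * b := by
  have hpos : 0 < 1 - 2 * η := by linarith
  have hτ' : 2 * (1 + η) < (1 - 2 * η) * τ := by rw [div_lt_iff₀ hpos] at hτ; linarith
  calc 2 * (1 + η) * a ≤ 2 * (1 + η) * δ := by gcongr
    _ ≤ (1 - 2 * η) * τ * δ := by gcongr; linarith
    _ = (1 - 2 * η) * (τ * δ) := by ring
    _ ≤ (1 - 2 * η) * b := by gcongr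

section InnerProduct

variable {X Y : Type*} [NormedAddCommGroup X] [InnerProductSpace ℝ X]
  [NormedAddCommGroup Y] [InnerProductSpace ℝ Y]

theorem norm_sub_le_norm_of_sq_le_two_inner {u v : X} (h : ‖v‖ ^ 2 ≤ 2 * ⟪u, v⟫_ℝ) :
    ‖u - v‖ ≤ ‖u‖ := by
  have hsq : ‖u - v‖ ^ 2 ≤ ‖u‖ ^ 2 := by rw [norm_sub_sq_real]; linarith
  exact pow_le_pow_iff_left₀ (norm_nonneg _) (norm_nonneg _) two_ne_zero |>.mp hsq

theorem sq_norm_le_two_inner_of_tangential {s e r : Y} {η : ℝ} (hη : 0 ≤ η)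
    (hr : ‖r‖ ≤ η * ‖s + e‖) (he : 2 * (1 + η) * ‖e‖ ≤ (1 - 2 * η) * ‖s‖) :
    ‖s‖ ^ 2 ≤ 2 * ⟪s + e - r, s⟫_ℝ := by
  have hes : -(‖e‖ * ‖s‖) ≤ ⟪e, s⟫_ℝ := by
    linarith [neg_abs_le ⟪e, s⟫_ℝ, abs_real_inner_le_norm e s]
  have hrs : ⟪r, s⟫_ℝ ≤ η * (‖s‖ + ‖e‖) * ‖s‖ :=
    calc ⟪r, s⟫_ℝ ≤ ‖r‖ * ‖s‖ := real_inner_le_norm r s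
      _ ≤ η * (‖s‖ + ‖e‖) * ‖s‖ := by
        gcongr
        exact hr.trans (mul_le_mul_of_nonneg_left (norm_add_le s e) hη)
  rw [inner_sub_left, inner_add_left, real_inner_self_eq_norm_sq]
  nlinarith [mul_le_mul_of_nonneg_right he (norm_nonneg s)]

variable [CompleteSpace X] [CompleteSpace Y]

theorem norm_sub_adjoint_le_norm {A : X →L[ℝ] Y} (hA : ‖A‖ ≤ 1) {u : X} {s : Y}
    (h : ‖s‖ ^ 2 ≤ 2 * ⟪A u, s⟫_ℝ) : ‖u - (A†) s‖ ≤ ‖u‖ := by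
  apply norm_sub_le_norm_of_sq_le_two_inner
  have hv : ‖(A†) s‖ ≤ ‖s‖ :=
    calc ‖(A†) s‖ ≤ ‖A†‖ * ‖s‖ := (A†).le_opNorm s
      _ = ‖A‖ * ‖s‖ := by rw [LinearIsometryEquiv.norm_map]
      _ ≤ ‖s‖ := mul_le_of_le_one_left (norm_nonneg s) hA
  rw [ContinuousLinearMap.adjoint_inner_right]
  nlinarith [norm_nonneg ((A†) s)]

theorem landweber_step_norm_sub_le {f : X → Y} {A : X →L[ℝ] Y} (hA : ‖A‖ ≤ 1) {η τ δ : ℝ}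
    (hη₀ : 0 ≤ η) (hη : η < 1 / 2) (hτ : 2 * (1 + η) / (1 - 2 * η) < τ) {x z : X} {yδ : Y}
    (htcc : ‖f z - f x - A (z - x)‖ ≤ η * ‖f z - f x‖) (hnoise : ‖yδ - f x‖ < δ)
    (hdisc : τ * δ < ‖f z - yδ‖) :
    ‖z - (A†) (f z - yδ) - x‖ ≤ ‖z - x‖ := by
  have hsplit : f z - yδ + (yδ - f x) = f z - f x := by abel
  have hAu : A (z - x) = f z - yδ + (yδ - f x) - (f z - f x - A (z - x)) := by abel
  rw [sub_right_comm]
  refine norm_sub_adjoint_le_norm hA ?_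
  rw [hAu]
  refine sq_norm_le_two_inner_of_tangential hη₀ (hsplit ▸ htcc) ?_
  exact noise_le_of_discrepancy hη₀ hη hτ hnoise hdisc (norm_nonneg _)

end InnerProduct

theorem ContinuousLinearMap.eq_zero_of_tangential_cone_of_neg {X Y : Type*}
    [NormedAddCommGroup X] [NormedSpace ℝ X] [NormedAddCommGroup Y] [NormedSpace ℝ Y]
    {f : X → Y} {A : X →L[ℝ] Y} {x₀ z : X} {ρ η : ℝ} (hρ : 0 < ρ) (hη : η < 0)
    (htcc : ∀ z' ∈ closedBall x₀ ρ, ‖f z - f z' - A (z - z')‖ ≤ η * ‖f z - f z'‖) :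
    A = 0 := by
  have hker : ball (z - x₀) ρ ⊆ (LinearMap.ker (A : X →ₗ[ℝ] Y) : Set X) := by
    intro w hw
    have hz' : z - w ∈ closedBall x₀ ρ := by
      rw [mem_closedBall, dist_eq_norm, sub_sub, add_comm, ← sub_sub, ← dist_eq_norm']
      exact (mem_ball.mp hw).le
    have h := htcc _ hz'
    have hf : f z - f (z - w) = 0 := by
      by_contra hne
      nlinarith [norm_pos_iff.mpr hne, norm_nonneg (f z - f (z - w) - A (z - (z - w)))]
    rw [hf, norm_zero, mul_zero, zero_sub, norm_neg, norm_le_zero_iff, sub_sub_cancel] at h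
    simpa using h
  have htop : LinearMap.ker (A : X →ₗ[ℝ] Y) = ⊤ :=
    (LinearMap.ker (A : X →ₗ[ℝ] Y)).eq_top_of_nonempty_interior'
      ⟨z - x₀, mem_interior_iff_mem_nhds.mpr
        (mem_of_superset (isOpen_ball.mem_nhds (mem_ball_self hρ)) hker)⟩
  ext w
  have hw : w ∈ LinearMap.ker (A : X →ₗ[ℝ] Y) := htop ▸ Submodule.mem_top
  simpa using hw

theorem loping_landweber_kaczmarz_monotone_general
    {X Y : Type*} [NormedAddCommGroup X] [InnerProductSpace ℝ X] [CompleteSpace X]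
    [NormedAddCommGroup Y] [InnerProductSpace ℝ Y] [CompleteSpace Y]
    {N : ℕ} [NeZero N]
    (F : Fin N → X → Y) (F' : Fin N → X → X →L[ℝ] Y)
    (x₀ : X) (ρ : ℝ) (hρ : 0 < ρ)
    (hscal : ∀ i, ∀ z ∈ closedBall x₀ ρ, ‖F' i z‖ ≤ 1)
    (η : ℝ) (hη : η < 1 / 2)
    (htcc : ∀ i, ∀ z ∈ closedBall x₀ ρ, ∀ z' ∈ closedBall x₀ ρ,
      ‖F i z - F i z' - F' i z (z - z')‖ ≤ η * ‖F i z - F i z'‖)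
    (y yδ : Fin N → Y) (δ : Fin N → ℝ)
    (τ : ℝ) (hτ : 2 * (1 + η) / (1 - 2 * η) < τ)
    (hnoise : ∀ i, ‖yδ i - y i‖ < δ i)
    (x : X) (hx : x ∈ closedBall x₀ ρ) (hsol : ∀ i, F i x = y i)
    (xs : ℕ → X)
    (ω : ℕ → ℝ)
    (hω : ∀ n, ω n =
      if τ * δ (n : Fin N) < ‖F (n : Fin N) (xs n) - yδ (n : Fin N)‖ then 1 else 0)
    (hxs : ∀ n, xs (n + 1) = xs n -
      ω n • (ContinuousLinearMap.adjoint (F' (n : Fin N) (xs n)))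
        (F (n : Fin N) (xs n) - yδ (n : Fin N)))
    (nstar : ℕ)
    (hball : ∀ n ≤ nstar, xs n ∈ closedBall x₀ ρ) :
    ∀ n ≤ nstar, ‖xs (n + 1) - x‖ ≤ ‖xs n - x‖ := by
  intro n hn
  rw [hxs n, hω n]
  split_ifs with hdisc
  · rw [one_smul]
    rcases le_or_gt 0 η with hη₀ | hηneg
    · exact landweber_step_norm_sub_le (hscal _ _ (hball n hn)) hη₀ hη hτ
        (htcc _ _ (hball n hn) x hx) (hsol _ ▸ hnoise _) hdisc
    · rw [ContinuousLinearMap.eq_zero_of_tangential_cone_of_neg hρ hηneg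
        (htcc _ _ (hball n hn))]
      simp
  · rw [zero_smul, sub_zero]

/-- **Monotonicity of the loping Landweber–Kaczmarz iteration up to the termination index.** -/
theorem loping_landweber_kaczmarz_monotone
    {X Y : Type*} [NormedAddCommGroup X] [InnerProductSpace ℝ X] [CompleteSpace X]
    [NormedAddCommGroup Y] [InnerProductSpace ℝ Y] [CompleteSpace Y]
    {N : ℕ} [NeZero N]
    (F : Fin N → X → Y) (F' : Fin N → X → X →L[ℝ] Y)
    (x₀ : X) (ρ : ℝ) (hρ : 0 < ρ)
    (hdiff : ∀ i, ∀ z ∈ closedBall x₀ ρ, HasFDerivAt (F i) (F' i z) z)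
    (hscal : ∀ i, ∀ z ∈ closedBall x₀ ρ, ‖F' i z‖ ≤ 1)
    (η : ℝ) (hη : η < 1 / 2)
    (htcc : ∀ i, ∀ z ∈ closedBall x₀ ρ, ∀ z' ∈ closedBall x₀ ρ,
      ‖F i z - F i z' - F' i z (z - z')‖ ≤ η * ‖F i z - F i z'‖)
    (y yδ : Fin N → Y) (δ : Fin N → ℝ) (hδ : ∀ i, 0 ≤ δ i)
    (τ : ℝ) (hτ : 2 * (1 + η) / (1 - 2 * η) < τ)
    (hnoise : ∀ i, ‖yδ i - y i‖ < δ i)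
    (x : X) (hx : x ∈ closedBall x₀ ρ) (hsol : ∀ i, F i x = y i)
    (xs : ℕ → X) (hxs0 : xs 0 = x₀)
    (ω : ℕ → ℝ)
    (hω : ∀ n, ω n =
      if τ * δ (n : Fin N) < ‖F (n : Fin N) (xs n) - yδ (n : Fin N)‖ then 1 else 0)
    (hxs : ∀ n, xs (n + 1) = xs n -
      ω n • (ContinuousLinearMap.adjoint (F' (n : Fin N) (xs n)))
        (F (n : Fin N) (xs n) - yδ (n : Fin N)))
    (nstar : ℕ) (hmulN : N ∣ nstar)
    (hstat : ∀ j ≤ N, xs (nstar + j) = xs nstar)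
    (hmin : ∀ m, N ∣ m → (∀ j ≤ N, xs (m + j) = xs m) → nstar ≤ m)
    (hball : ∀ n ≤ nstar, xs n ∈ closedBall x₀ ρ) :
    ∀ n ≤ nstar, ‖xs (n + 1) - x‖ ≤ ‖xs n - x‖ :=
  loping_landweber_kaczmarz_monotone_general F F' x₀ ρ hρ hscal η hη htcc y yδ δ τ hτ hnoise x hx
    hsol xs ω hω hxs nstar hball
end

section
/- Assume the system F_i(x) = y^i (i = 0,…,N−1) has a solution in B_{ρ/2}(x_0), and consider the lLK iteration with exact data, i.e. y^{δ,i} = y^i and δ^i = 0 (so that ω_n = 1 whenever the residual is nonzero). Then the sequence (x_n) converges in X to a solution x* of the system F_i(x*) = y^i for all i = 0,…,N−1. -/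
/-!
With exact data every step is a Landweber step `x ↦ x - A* r` for one of the equations, and the
tangential cone condition gives `‖x_{n+1} - z‖² + (1 - 2η) ‖r_n‖² ≤ ‖x_n - z‖²` for any solution
`z ∈ B_{ρ/2}(x₀)`. So the iterates stay in `B_ρ(x₀)`, `‖x_n - z‖` decreases, and the residuals are
square summable.

The sweep starts `x_{aN}` form a Cauchy sequence by the argument of Hanke, Neubauer and Scherzer:
compare `x_{aN}` and `x_{bN}` with `x_{cN}`, where `c ∈ [a, b)` has the smallest sweep residual
`S_c = ∑_{cN ≤ j < cN+N} ‖r_j‖`. Since `F_i` is 1-Lipschitz on the ball,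
`‖F_i(x_{cN}) - y_i‖ ≤ S_c`, and with the tangential cone condition
`‖F'_j(x_j)(x_{cN} - z)‖ ≤ 3 (‖r_j‖ + S_c)`. Minimality of `S_c` and Cauchy–Schwarz then bound
`⟪x_{cN} - x_{mN}, x_{cN} - z⟫` (`m = a, b`) by a multiple of a tail of `∑ ‖r_n‖²`. As the steps are bounded by the residuals, the whole sequence converges, and by
continuity the limit solves every equation.
-/

open Metric Filter
open Fin.NatCast

open Finset
open ContinuousLinearMap (adjoint adjoint_inner_left adjoint_inner_right)
open scoped RealInnerProductSpace Topology

theorem summable_of_sq_add_mul_le {a g : ℕ → ℝ} {κ : ℝ} (hκ : 0 < κ) (hg : ∀ n, 0 ≤ g n)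
    (h : ∀ n, a (n + 1) ^ 2 + κ * g n ≤ a n ^ 2) : Summable g :=
  (summable_mul_left_iff hκ.ne').1 <|
    summable_of_sum_range_le (fun n => mul_nonneg hκ.le (hg n)) fun n =>
      calc ∑ i ∈ range n, κ * g i ≤ ∑ i ∈ range n, (a i ^ 2 - a (i + 1) ^ 2) :=
            sum_le_sum fun i _ => by linarith [h i]
        _ = a 0 ^ 2 - a n ^ 2 := sum_range_sub' _ n
        _ ≤ a 0 ^ 2 := by linarith [sq_nonneg (a n)]

theorem sum_Ico_le_tsum_nat_add {g : ℕ → ℝ} (hg : ∀ n, 0 ≤ g n) (hs : Summable g) (p q : ℕ) :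
    ∑ j ∈ Ico p q, g j ≤ ∑' j, g (j + p) := by
  rw [sum_Ico_eq_sum_range]
  simp_rw [add_comm p]
  exact (hs.comp_injective (add_left_injective p)).sum_le_tsum _ fun j _ => hg _

theorem sum_Ico_mul_eq_sum_sum_Ico {M : Type*} [AddCommMonoid M] (f : ℕ → M) (N : ℕ) {a b : ℕ}
    (hab : a ≤ b) :
    ∑ j ∈ Ico (a * N) (b * N), f j = ∑ c ∈ Ico a b, ∑ j ∈ Ico (c * N) (c * N + N), f j := by
  induction b, hab using Nat.le_induction with
  | base => simp
  | succ b hab ih =>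
    rw [sum_Ico_succ_top hab, ← ih, add_one_mul,
      sum_Ico_consecutive _ (Nat.mul_le_mul_right N hab) (Nat.le_add_right _ _)]

theorem tendsto_mul_add_atTop {N : ℕ} (hN : 0 < N) (k : ℕ) :
    Tendsto (fun a => a * N + k) atTop atTop :=
  (tendsto_add_atTop_nat k).comp <|
    tendsto_atTop_mono (fun a => Nat.le_mul_of_pos_right a hN) tendsto_id

theorem tendsto_of_forall_tendsto_comp_mul_add {α : Type*} {u : ℕ → α} {l : Filter α} {N : ℕ}
    (hN : 0 < N) (h : ∀ k < N, Tendsto (fun a => u (a * N + k)) atTop l) :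
    Tendsto u atTop l := by
  intro s hs
  obtain ⟨a₀, ha₀⟩ := eventually_atTop.1 <|
    (eventually_all_finite (Set.finite_lt_nat N)).2 fun k hk => h k hk hs
  refine mem_map.2 (mem_atTop_sets.2 ⟨a₀ * N, fun n hn => ?_⟩)
  rw [Set.mem_preimage, ← Nat.div_add_mod' n N]
  exact ha₀ (n / N) ((Nat.le_div_iff_mul_le hN).2 hn) (n % N) (Nat.mod_lt n hN)

theorem tendsto_comp_mul_add_of_tendsto_sub {G : Type*} [AddCommGroup G] [TopologicalSpace G]
    [IsTopologicalAddGroup G] {u : ℕ → G} {x : G} {N : ℕ} (hN : 0 < N)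
    (hx : Tendsto (fun a => u (a * N)) atTop (𝓝 x))
    (hstep : Tendsto (fun n => u (n + 1) - u n) atTop (𝓝 0)) (k : ℕ) :
    Tendsto (fun a => u (a * N + k)) atTop (𝓝 x) := by
  induction k with
  | zero => exact hx
  | succ k ih =>
    simpa [add_assoc] using ih.add (hstep.comp (tendsto_mul_add_atTop hN k))

theorem tendsto_zero_of_summable_norm_sq {E : Type*} [SeminormedAddCommGroup E] {r : ℕ → E}
    (hr : Summable fun n => ‖r n‖ ^ 2) : Tendsto r atTop (𝓝 0) := by
  rw [tendsto_zero_iff_norm_tendsto_zero]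
  simpa using hr.tendsto_atTop_zero.sqrt

theorem eq_of_tendsto_residual {X Y : Type*} [TopologicalSpace X] [NormedAddCommGroup Y] {N : ℕ}
    [NeZero N] {F : Fin N → X → Y} {y : Fin N → Y} {xs : ℕ → X} {x : X} (i : Fin N)
    (hF : ContinuousAt (F i) x) (hx : Tendsto (fun a => xs (a * N + i)) atTop (𝓝 x))
    (hr : Tendsto (fun n : ℕ => F n (xs n) - y n) atTop (𝓝 0)) : F i x = y i := by
  have hsub := hr.comp (tendsto_mul_add_atTop (Nat.pos_of_neZero N) i)
  have hcast : ∀ a : ℕ, ((a * N + i : ℕ) : Fin N) = i := by simp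
  simp only [Function.comp_def, hcast] at hsub
  exact sub_eq_zero.1 (tendsto_nhds_unique ((hF.tendsto.comp hx).sub_const (y i)) hsub)

section Hilbert

variable {X Y : Type*} [NormedAddCommGroup X] [InnerProductSpace ℝ X]
  [NormedAddCommGroup Y] [InnerProductSpace ℝ Y]

theorem norm_sub_sq_eq_sub_add_inner (u v : X) :
    ‖u - v‖ ^ 2 = ‖u‖ ^ 2 - ‖v‖ ^ 2 + 2 * ⟪v - u, v⟫ := by
  rw [norm_sub_sq_real, inner_sub_left, real_inner_self_eq_norm_sq, real_inner_comm]
  ring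

/-- The Cauchy criterion of Hanke, Neubauer and Scherzer for Landweber-type iterations. -/
theorem cauchySeq_of_antitone_norm_of_abs_inner_le {e : ℕ → X} (he : Antitone fun n => ‖e n‖)
    {δ : ℕ → ℝ} (hδ : Tendsto δ atTop (𝓝 0))
    (h : ∀ a b, a ≤ b → ∃ c ≤ b, |⟪e c - e a, e c⟫| ≤ δ a ∧ |⟪e c - e b, e c⟫| ≤ δ a) :
    CauchySeq e := by
  have he2 : Antitone fun n => ‖e n‖ ^ 2 := fun m n hmn =>
    pow_le_pow_left₀ (norm_nonneg _) (he hmn) 2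
  have hL := tendsto_atTop_ciInf he2 ⟨0, by rintro _ ⟨n, rfl⟩; positivity⟩
  set L := ⨅ n, ‖e n‖ ^ 2
  refine cauchySeq_of_le_tendsto_0' (fun a => √(2 * (‖e a‖ ^ 2 - L) + 8 * δ a))
    (fun a b hab => ?_) ?_
  · obtain ⟨c, hcb, hca, hcb'⟩ := h a b hab
    have hea := norm_sub_sq_eq_sub_add_inner (e a) (e c)
    have heb := norm_sub_sq_eq_sub_add_inner (e b) (e c)
    have hLa := he2.le_of_tendsto hL a
    have hLc := he2.le_of_tendsto hL c
    have hbc : ‖e b‖ ^ 2 ≤ ‖e c‖ ^ 2 := he2 hcb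
    have htri : ‖e a - e b‖ ≤ ‖e a - e c‖ + ‖e b - e c‖ := by
      simpa [norm_sub_rev (e c) (e b)] using norm_sub_le_norm_sub_add_norm_sub (e a) (e c) (e b)
    rw [dist_eq_norm, Real.le_sqrt (norm_nonneg _) (by linarith [(abs_nonneg _).trans hca])]
    nlinarith [abs_le.1 hca, abs_le.1 hcb', pow_le_pow_left₀ (norm_nonneg _) htri 2,
      sq_nonneg (‖e a - e c‖ - ‖e b - e c‖)]
  · simpa using ((((hL.sub_const L).const_mul 2).add (hδ.const_mul 8))).sqrt

theorem abs_sum_inner_le {A : ℕ → X →L[ℝ] Y} {r : ℕ → Y} {w : X} {C S : ℝ}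
    (hA : ∀ j, ‖A j w‖ ≤ C * (‖r j‖ + S)) {p q m n : ℕ} (hsub : Ico p q ⊆ Ico m n) :
    |∑ j ∈ Ico p q, ⟪r j, A j w⟫| ≤
      C * (∑ j ∈ Ico m n, ‖r j‖ ^ 2 + S * ∑ j ∈ Ico m n, ‖r j‖) :=
  calc |∑ j ∈ Ico p q, ⟪r j, A j w⟫| ≤ ∑ j ∈ Ico p q, ‖r j‖ * ‖A j w‖ :=
        (abs_sum_le_sum_abs _ _).trans (sum_le_sum fun j _ => abs_real_inner_le_norm _ _)
    _ ≤ ∑ j ∈ Ico m n, ‖r j‖ * ‖A j w‖ :=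
        sum_le_sum_of_subset_of_nonneg hsub fun j _ _ => by positivity
    _ ≤ ∑ j ∈ Ico m n, ‖r j‖ * (C * (‖r j‖ + S)) :=
        sum_le_sum fun j _ => mul_le_mul_of_nonneg_left (hA j) (norm_nonneg _)
    _ = C * (∑ j ∈ Ico m n, ‖r j‖ ^ 2 + S * ∑ j ∈ Ico m n, ‖r j‖) := by
        rw [mul_sum, ← sum_add_distrib, mul_sum]
        exact sum_congr rfl fun j _ => by ring

end Hilbert

theorem ite_norm_pos_smul_map {E F 𝓕 : Type*} [NormedAddCommGroup E] [AddCommGroup F]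
    [Module ℝ F] [FunLike 𝓕 E F] [ZeroHomClass 𝓕 E F] (T : 𝓕) (v : E) :
    (if 0 < ‖v‖ then (1 : ℝ) else 0) • T v = T v := by
  split_ifs with h
  · exact one_smul ℝ _
  · rw [norm_le_zero_iff.1 (not_lt.1 h), map_zero, smul_zero]

def cycleResidual {E : Type*} [SeminormedAddCommGroup E] (r : ℕ → E) (N c : ℕ) : ℝ :=
  ∑ j ∈ Ico (c * N) (c * N + N), ‖r j‖

theorem cycleResidual_mul_sum_le {E : Type*} [SeminormedAddCommGroup E] {r : ℕ → E} {N a b c : ℕ}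
    (hab : a ≤ b) (hc : ∀ c' ∈ Ico a b, cycleResidual r N c ≤ cycleResidual r N c') :
    cycleResidual r N c * ∑ j ∈ Ico (a * N) (b * N), ‖r j‖ ≤
      N * ∑ j ∈ Ico (a * N) (b * N), ‖r j‖ ^ 2 := by
  rw [sum_Ico_mul_eq_sum_sum_Ico _ N hab, sum_Ico_mul_eq_sum_sum_Ico _ N hab, mul_sum, mul_sum]
  refine sum_le_sum fun c' hc' => ?_
  calc cycleResidual r N c * cycleResidual r N c' ≤ cycleResidual r N c' ^ 2 := by
        rw [sq]
        exact mul_le_mul_of_nonneg_right (hc c' hc') (sum_nonneg fun _ _ => norm_nonneg _)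
    _ ≤ N * ∑ j ∈ Ico (c' * N) (c' * N + N), ‖r j‖ ^ 2 := by
        simpa [cycleResidual] using
          sq_sum_le_card_mul_sum_sq (s := Ico (c' * N) (c' * N + N)) (f := fun j => ‖r j‖)

section Landweber

variable {X Y : Type*} [NormedAddCommGroup X] [InnerProductSpace ℝ X] [CompleteSpace X]
  [NormedAddCommGroup Y] [InnerProductSpace ℝ Y] [CompleteSpace Y]

theorem norm_adjoint_apply_le {A : X →L[ℝ] Y} (hA : ‖A‖ ≤ 1) (v : Y) : ‖adjoint A v‖ ≤ ‖v‖ :=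
  calc ‖adjoint A v‖ ≤ ‖adjoint A‖ * ‖v‖ := (adjoint A).le_opNorm v
    _ ≤ 1 * ‖v‖ := by
        rw [LinearIsometryEquiv.norm_map]
        exact mul_le_mul_of_nonneg_right hA (norm_nonneg v)
    _ = ‖v‖ := one_mul _

theorem norm_sub_adjoint_sub_sq_add_le {A : X →L[ℝ] Y} (hA : ‖A‖ ≤ 1) {x z : X} {r : Y} {η : ℝ}
    (h : ‖r - A (x - z)‖ ≤ η * ‖r‖) :
    ‖x - adjoint A r - z‖ ^ 2 + (1 - 2 * η) * ‖r‖ ^ 2 ≤ ‖x - z‖ ^ 2 := by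
  have hinner : (1 - η) * ‖r‖ ^ 2 ≤ ⟪A (x - z), r⟫ := by
    have hη : ⟪r - A (x - z), r⟫ ≤ η * ‖r‖ ^ 2 :=
      calc ⟪r - A (x - z), r⟫ ≤ ‖r - A (x - z)‖ * ‖r‖ := real_inner_le_norm _ _
        _ ≤ η * ‖r‖ * ‖r‖ := mul_le_mul_of_nonneg_right h (norm_nonneg r)
        _ = η * ‖r‖ ^ 2 := by ring
    rw [inner_sub_left, real_inner_self_eq_norm_sq] at hη
    linarith
  have hadj := pow_le_pow_left₀ (norm_nonneg _) (norm_adjoint_apply_le hA r) 2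
  rw [sub_right_comm, norm_sub_sq_real, adjoint_inner_right]
  linarith

theorem inner_sub_eq_sum_inner {A : ℕ → X →L[ℝ] Y} {r : ℕ → Y} {xs : ℕ → X}
    (hxs : ∀ n, xs (n + 1) = xs n - adjoint (A n) (r n)) {p q : ℕ} (hpq : p ≤ q) (w : X) :
    ⟪xs p - xs q, w⟫ = ∑ j ∈ Ico p q, ⟪r j, A j w⟫ := by
  have hsum : xs p - xs q = ∑ j ∈ Ico p q, adjoint (A j) (r j) := by
    rw [← neg_sub, ← sum_Ico_sub xs hpq, ← sum_neg_distrib]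
    refine sum_congr rfl fun j _ => ?_
    rw [hxs]
    abel
  rw [hsum, sum_inner]
  simp_rw [adjoint_inner_left]

theorem cauchySeq_comp_mul_of_summable {A : ℕ → X →L[ℝ] Y} {r : ℕ → Y} {xs : ℕ → X} {z : X}
    {N : ℕ} {C : ℝ} (hN : 0 < N) (hC : 0 ≤ C)
    (hxs : ∀ n, xs (n + 1) = xs n - adjoint (A n) (r n))
    (hdist : Antitone fun n => ‖xs n - z‖) (hr : Summable fun n => ‖r n‖ ^ 2)
    (hA : ∀ j c, ‖A j (xs (c * N) - z)‖ ≤ C * (‖r j‖ + cycleResidual r N c)) :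
    CauchySeq fun a => xs (a * N) := by
  set T : ℕ → ℝ := fun k => ∑' j, ‖r (j + k)‖ ^ 2
  have hT : ∀ k, 0 ≤ T k := fun k => tsum_nonneg fun _ => sq_nonneg _
  have hbound : ∀ a b c, a ≤ b → (∀ c' ∈ Ico a b, cycleResidual r N c ≤ cycleResidual r N c') →
      ∀ p q, Ico p q ⊆ Ico (a * N) (b * N) →
        |∑ j ∈ Ico p q, ⟪r j, A j (xs (c * N) - z)⟫| ≤ C * (N + 1) * T (a * N) := by
    intro a b c hab hc p q hsub
    refine (abs_sum_inner_le (hA · c) hsub).trans ?_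
    have hsq := sum_Ico_le_tsum_nat_add (fun n => sq_nonneg ‖r n‖) hr (a * N) (b * N)
    have hmin := cycleResidual_mul_sum_le hab hc
    rw [mul_assoc]
    refine mul_le_mul_of_nonneg_left ?_ hC
    nlinarith [(Nat.cast_nonneg N : (0 : ℝ) ≤ N)]
  have hδ : Tendsto (fun a => C * (N + 1) * T (a * N)) atTop (𝓝 0) := by
    simpa using ((tendsto_sum_nat_add fun j => ‖r j‖ ^ 2).comp
      (tendsto_mul_add_atTop hN 0)).const_mul (C * (N + 1))
  suffices CauchySeq fun a => xs (a * N) - z by simpa using this.add_const (x := z)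
  refine cauchySeq_of_antitone_norm_of_abs_inner_le
    (hdist.comp_monotone fun a b hab => Nat.mul_le_mul_right N hab) hδ fun a b hab => ?_
  -- the intermediate sweep start is the one with the smallest sweep residual
  rcases hab.eq_or_lt with rfl | hlt
  · exact ⟨a, le_rfl, by simpa using mul_nonneg (by positivity) (hT (a * N))⟩
  obtain ⟨c, hc, hmin⟩ := exists_min_image (Ico a b) (cycleResidual r N) (nonempty_Ico.2 hlt)
  have haN : a * N ≤ c * N := Nat.mul_le_mul_right N (mem_Ico.1 hc).1
  have hbN : c * N ≤ b * N := Nat.mul_le_mul_right N (mem_Ico.1 hc).2.le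
  refine ⟨c, (mem_Ico.1 hc).2.le, ?_, ?_⟩
  · rw [sub_sub_sub_cancel_right, ← neg_sub, inner_neg_left, abs_neg,
      inner_sub_eq_sum_inner hxs haN]
    exact hbound a b c hlt.le hmin _ _ (Ico_subset_Ico le_rfl hbN)
  · rw [sub_sub_sub_cancel_right, inner_sub_eq_sum_inner hxs hbN]
    exact hbound a b c hlt.le hmin _ _ (Ico_subset_Ico haN le_rfl)

end Landweber

section LandweberKaczmarz

variable {X Y : Type*} [NormedAddCommGroup X] [InnerProductSpace ℝ X] [CompleteSpace X]
  [NormedAddCommGroup Y] [InnerProductSpace ℝ Y] [CompleteSpace Y]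
  {N : ℕ} [NeZero N] {F : Fin N → X → Y} {F' : Fin N → X → X →L[ℝ] Y} {x₀ z : X} {ρ η : ℝ}
  {y : Fin N → Y} {xs : ℕ → X}

theorem iterate_energy_le (hscal : ∀ i, ∀ x ∈ closedBall x₀ ρ, ‖F' i x‖ ≤ 1)
    (htcc : ∀ i, ∀ x ∈ closedBall x₀ ρ, ∀ x' ∈ closedBall x₀ ρ,
      ‖F i x - F i x' - F' i x (x - x')‖ ≤ η * ‖F i x - F i x'‖)
    (hz : z ∈ closedBall x₀ ρ) (hsol : ∀ i, F i z = y i)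
    (hxs : ∀ n, xs (n + 1) = xs n - adjoint (F' n (xs n)) (F n (xs n) - y n))
    {n : ℕ} (hn : xs n ∈ closedBall x₀ ρ) :
    ‖xs (n + 1) - z‖ ^ 2 + (1 - 2 * η) * ‖F n (xs n) - y n‖ ^ 2 ≤ ‖xs n - z‖ ^ 2 := by
  rw [hxs]
  exact norm_sub_adjoint_sub_sq_add_le (hscal _ _ hn) (by simpa [hsol] using htcc _ _ hn z hz)

theorem iterate_mem_closedBall (hscal : ∀ i, ∀ x ∈ closedBall x₀ ρ, ‖F' i x‖ ≤ 1)
    (hη : η < 1 / 2)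
    (htcc : ∀ i, ∀ x ∈ closedBall x₀ ρ, ∀ x' ∈ closedBall x₀ ρ,
      ‖F i x - F i x' - F' i x (x - x')‖ ≤ η * ‖F i x - F i x'‖)
    (hz : z ∈ closedBall x₀ (ρ / 2)) (hsol : ∀ i, F i z = y i) (hxs0 : xs 0 = x₀)
    (hxs : ∀ n, xs (n + 1) = xs n - adjoint (F' n (xs n)) (F n (xs n) - y n)) (n : ℕ) :
    xs n ∈ closedBall z (ρ / 2) := by
  have hz' : dist z x₀ ≤ ρ / 2 := hz
  have hsub : closedBall z (ρ / 2) ⊆ closedBall x₀ ρ := closedBall_subset_closedBall' (by linarith)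
  induction n with
  | zero => rwa [hxs0, mem_closedBall_comm]
  | succ n ih =>
    have h := iterate_energy_le hscal htcc (hsub (mem_closedBall_self (dist_nonneg.trans hz'))) hsol
      hxs (hsub ih)
    rw [mem_closedBall, dist_eq_norm] at ih ⊢
    rw [← pow_le_pow_iff_left₀ (norm_nonneg _) (dist_nonneg.trans hz') two_ne_zero]
    nlinarith [pow_le_pow_left₀ (norm_nonneg _) ih 2, sq_nonneg ‖F n (xs n) - y n‖]

theorem antitone_norm_iterate_sub (hscal : ∀ i, ∀ x ∈ closedBall x₀ ρ, ‖F' i x‖ ≤ 1)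
    (hη : η < 1 / 2)
    (htcc : ∀ i, ∀ x ∈ closedBall x₀ ρ, ∀ x' ∈ closedBall x₀ ρ,
      ‖F i x - F i x' - F' i x (x - x')‖ ≤ η * ‖F i x - F i x'‖)
    (hz : z ∈ closedBall x₀ ρ) (hsol : ∀ i, F i z = y i) (hmem : ∀ n, xs n ∈ closedBall x₀ ρ)
    (hxs : ∀ n, xs (n + 1) = xs n - adjoint (F' n (xs n)) (F n (xs n) - y n)) :
    Antitone fun n => ‖xs n - z‖ :=
  antitone_nat_of_succ_le fun n =>
    (pow_le_pow_iff_left₀ (norm_nonneg _) (norm_nonneg _) two_ne_zero).1 <| by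
      nlinarith [iterate_energy_le hscal htcc hz hsol hxs (hmem n), sq_nonneg ‖F n (xs n) - y n‖]

theorem summable_norm_residual_sq (hscal : ∀ i, ∀ x ∈ closedBall x₀ ρ, ‖F' i x‖ ≤ 1)
    (hη : η < 1 / 2)
    (htcc : ∀ i, ∀ x ∈ closedBall x₀ ρ, ∀ x' ∈ closedBall x₀ ρ,
      ‖F i x - F i x' - F' i x (x - x')‖ ≤ η * ‖F i x - F i x'‖)
    (hz : z ∈ closedBall x₀ ρ) (hsol : ∀ i, F i z = y i) (hmem : ∀ n, xs n ∈ closedBall x₀ ρ)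
    (hxs : ∀ n, xs (n + 1) = xs n - adjoint (F' n (xs n)) (F n (xs n) - y n)) :
    Summable fun n : ℕ => ‖F n (xs n) - y n‖ ^ 2 :=
  summable_of_sq_add_mul_le (a := fun n => ‖xs n - z‖) (by linarith) (fun n => sq_nonneg _) fun n =>
    iterate_energy_le hscal htcc hz hsol hxs (hmem n)

theorem dist_iterate_succ_le (hscal : ∀ i, ∀ x ∈ closedBall x₀ ρ, ‖F' i x‖ ≤ 1)
    (hmem : ∀ n, xs n ∈ closedBall x₀ ρ)
    (hxs : ∀ n, xs (n + 1) = xs n - adjoint (F' n (xs n)) (F n (xs n) - y n)) (n : ℕ) :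
    dist (xs n) (xs (n + 1)) ≤ ‖F n (xs n) - y n‖ := by
  rw [hxs, dist_eq_norm, sub_sub_cancel]
  exact norm_adjoint_apply_le (hscal _ _ (hmem n)) _

theorem norm_apply_sub_le_cycleResidual
    (hdiff : ∀ i, ∀ x ∈ closedBall x₀ ρ, HasFDerivAt (F i) (F' i x) x)
    (hscal : ∀ i, ∀ x ∈ closedBall x₀ ρ, ‖F' i x‖ ≤ 1) (hmem : ∀ n, xs n ∈ closedBall x₀ ρ)
    (hxs : ∀ n, xs (n + 1) = xs n - adjoint (F' n (xs n)) (F n (xs n) - y n)) (i : Fin N)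
    (c : ℕ) : ‖F i (xs (c * N)) - y i‖ ≤ cycleResidual (fun n => F n (xs n) - y n) N c := by
  set m := c * N + i
  have hm : (m : Fin N) = i := by simp [m]
  have hlip : ‖F i (xs (c * N)) - F i (xs m)‖ ≤ dist (xs (c * N)) (xs m) := by
    simpa [dist_eq_norm] using (convex_closedBall x₀ ρ).norm_image_sub_le_of_norm_hasFDerivWithin_le
      (fun v hv => (hdiff i v hv).hasFDerivWithinAt) (hscal i) (hmem m) (hmem (c * N))
  have hchain := dist_le_Ico_sum_of_dist_le (f := xs) (Nat.le_add_right (c * N) i)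
    fun _ _ => dist_iterate_succ_le hscal hmem hxs _
  calc ‖F i (xs (c * N)) - y i‖ ≤ ‖F i (xs (c * N)) - F i (xs m)‖ + ‖F i (xs m) - y i‖ :=
        norm_sub_le_norm_sub_add_norm_sub _ _ _
    _ ≤ ∑ j ∈ Ico (c * N) m, ‖F j (xs j) - y j‖ + ‖F m (xs m) - y m‖ := by
        rw [hm]
        exact add_le_add_left (hlip.trans hchain) _
    _ = ∑ j ∈ Ico (c * N) (m + 1), ‖F j (xs j) - y j‖ :=
        (sum_Ico_succ_top (Nat.le_add_right _ _) _).symm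
    _ ≤ cycleResidual (fun n => F n (xs n) - y n) N c :=
        sum_le_sum_of_subset_of_nonneg (Ico_subset_Ico le_rfl (by omega))
          fun _ _ _ => norm_nonneg _

theorem norm_fderiv_iterate_apply_le
    (hdiff : ∀ i, ∀ x ∈ closedBall x₀ ρ, HasFDerivAt (F i) (F' i x) x)
    (hscal : ∀ i, ∀ x ∈ closedBall x₀ ρ, ‖F' i x‖ ≤ 1) (hη : η < 1 / 2)
    (htcc : ∀ i, ∀ x ∈ closedBall x₀ ρ, ∀ x' ∈ closedBall x₀ ρ,
      ‖F i x - F i x' - F' i x (x - x')‖ ≤ η * ‖F i x - F i x'‖)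
    (hz : z ∈ closedBall x₀ ρ) (hsol : ∀ i, F i z = y i) (hmem : ∀ n, xs n ∈ closedBall x₀ ρ)
    (hxs : ∀ n, xs (n + 1) = xs n - adjoint (F' n (xs n)) (F n (xs n) - y n)) (j c : ℕ) :
    ‖F' j (xs j) (xs (c * N) - z)‖ ≤
      3 * (‖F j (xs j) - y j‖ + cycleResidual (fun n => F n (xs n) - y n) N c) := by
  have hlin : ∀ v ∈ closedBall x₀ ρ, ‖F' j (xs j) (xs j - v)‖ ≤ 3 / 2 * ‖F j (xs j) - F j v‖ :=
    fun v hv => by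
      have h := htcc j (xs j) (hmem j) v hv
      have := norm_sub_le (F j (xs j) - F j v) (F j (xs j) - F j v - F' j (xs j) (xs j - v))
      rw [sub_sub_cancel] at this
      nlinarith [norm_nonneg (F j (xs j) - F j v)]
  have hz' := hlin z hz
  rw [hsol] at hz'
  have hc := hlin (xs (c * N)) (hmem _)
  have htri := norm_sub_le_norm_sub_add_norm_sub (F j (xs j)) (y j) (F j (xs (c * N)))
  rw [norm_sub_rev (y j)] at htri
  have hres := norm_apply_sub_le_cycleResidual hdiff hscal hmem hxs j c
  calc ‖F' j (xs j) (xs (c * N) - z)‖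
        = ‖F' j (xs j) (xs j - z) - F' j (xs j) (xs j - xs (c * N))‖ := by
        rw [← map_sub, sub_sub_sub_cancel_left]
    _ ≤ ‖F' j (xs j) (xs j - z)‖ + ‖F' j (xs j) (xs j - xs (c * N))‖ := norm_sub_le _ _
    _ ≤ _ := by linarith [(norm_nonneg _).trans hres]

end LandweberKaczmarz

theorem loping_landweber_kaczmarz_exact_data_convergence_general
    {X Y : Type*} [NormedAddCommGroup X] [InnerProductSpace ℝ X] [CompleteSpace X]
    [NormedAddCommGroup Y] [InnerProductSpace ℝ Y] [CompleteSpace Y]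
    {N : ℕ} [NeZero N]
    (F : Fin N → X → Y) (F' : Fin N → X → X →L[ℝ] Y)
    (x₀ : X) (ρ : ℝ)
    (hdiff : ∀ i, ∀ z ∈ closedBall x₀ ρ, HasFDerivAt (F i) (F' i z) z)
    (hscal : ∀ i, ∀ z ∈ closedBall x₀ ρ, ‖F' i z‖ ≤ 1)
    (η : ℝ) (hη : η < 1 / 2)
    (htcc : ∀ i, ∀ z ∈ closedBall x₀ ρ, ∀ z' ∈ closedBall x₀ ρ,
      ‖F i z - F i z' - F' i z (z - z')‖ ≤ η * ‖F i z - F i z'‖)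
    (y : Fin N → Y)
    (hex : ∃ z ∈ closedBall x₀ (ρ / 2), ∀ i, F i z = y i)
    (xs : ℕ → X) (hxs0 : xs 0 = x₀)
    (ω : ℕ → ℝ)
    (hω : ∀ n, ω n = if 0 < ‖F (n : Fin N) (xs n) - y (n : Fin N)‖ then 1 else 0)
    (hxs : ∀ n, xs (n + 1) = xs n -
      ω n • (ContinuousLinearMap.adjoint (F' (n : Fin N) (xs n)))
        (F (n : Fin N) (xs n) - y (n : Fin N)))
    : ∃ xstar : X, Tendsto xs atTop (nhds xstar) ∧ ∀ i, F i xstar = y i := by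
  obtain ⟨z, hz, hsol⟩ := hex
  have hN : 0 < N := Nat.pos_of_neZero N
  have hstep : ∀ n, xs (n + 1) = xs n - adjoint (F' n (xs n)) (F n (xs n) - y n) := fun n => by
    rw [hxs, hω, ite_norm_pos_smul_map]
  have hball : closedBall z (ρ / 2) ⊆ closedBall x₀ ρ :=
    closedBall_subset_closedBall' (by rw [mem_closedBall] at hz; linarith)
  have hz' : z ∈ closedBall x₀ ρ := hball (mem_closedBall_self (dist_nonneg.trans hz))
  have hmem : ∀ n, xs n ∈ closedBall x₀ ρ := fun n =>
    hball (iterate_mem_closedBall hscal hη htcc hz hsol hxs0 hstep n)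
  have hres := summable_norm_residual_sq hscal hη htcc hz' hsol hmem hstep
  have hr0 := tendsto_zero_of_summable_norm_sq hres
  obtain ⟨xstar, hlim⟩ := cauchySeq_tendsto_of_complete <|
    cauchySeq_comp_mul_of_summable hN zero_le_three hstep
      (antitone_norm_iterate_sub hscal hη htcc hz' hsol hmem hstep) hres
      (norm_fderiv_iterate_apply_le hdiff hscal hη htcc hz' hsol hmem hstep)
  have hsteps : Tendsto (fun n => xs (n + 1) - xs n) atTop (𝓝 0) :=
    squeeze_zero_norm
      (fun n => by simpa [dist_eq_norm'] using dist_iterate_succ_le hscal hmem hstep n)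
      (tendsto_zero_iff_norm_tendsto_zero.1 hr0)
  have hsubseq := tendsto_comp_mul_add_of_tendsto_sub hN hlim hsteps
  have hxstar : xstar ∈ closedBall x₀ ρ :=
    isClosed_closedBall.mem_of_tendsto hlim (Eventually.of_forall fun _ => hmem _)
  exact ⟨xstar, tendsto_of_forall_tendsto_comp_mul_add hN fun k _ => hsubseq k,
    fun i => eq_of_tendsto_residual i (hdiff i xstar hxstar).continuousAt (hsubseq i) hr0⟩

/-- **Convergence of the loping Landweber–Kaczmarz method for exact data.**
With exact data (`yδ = y`, `δ = 0`, so `ω n = 1` whenever the residual is nonzero),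
the iterates converge to a solution of the system. -/
theorem loping_landweber_kaczmarz_exact_data_convergence
    {X Y : Type*} [NormedAddCommGroup X] [InnerProductSpace ℝ X] [CompleteSpace X]
    [NormedAddCommGroup Y] [InnerProductSpace ℝ Y] [CompleteSpace Y]
    {N : ℕ} [NeZero N]
    (F : Fin N → X → Y) (F' : Fin N → X → X →L[ℝ] Y)
    (x₀ : X) (ρ : ℝ) (hρ : 0 < ρ)
    (hdiff : ∀ i, ∀ z ∈ closedBall x₀ ρ, HasFDerivAt (F i) (F' i z) z)
    (hscal : ∀ i, ∀ z ∈ closedBall x₀ ρ, ‖F' i z‖ ≤ 1)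
    (η : ℝ) (hη : η < 1 / 2)
    (htcc : ∀ i, ∀ z ∈ closedBall x₀ ρ, ∀ z' ∈ closedBall x₀ ρ,
      ‖F i z - F i z' - F' i z (z - z')‖ ≤ η * ‖F i z - F i z'‖)
    (y : Fin N → Y)
    (hex : ∃ z ∈ closedBall x₀ (ρ / 2), ∀ i, F i z = y i)
    (xs : ℕ → X) (hxs0 : xs 0 = x₀)
    (ω : ℕ → ℝ)
    (hω : ∀ n, ω n = if 0 < ‖F (n : Fin N) (xs n) - y (n : Fin N)‖ then 1 else 0)
    (hxs : ∀ n, xs (n + 1) = xs n -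
      ω n • (ContinuousLinearMap.adjoint (F' (n : Fin N) (xs n)))
        (F (n : Fin N) (xs n) - y (n : Fin N)))
    : ∃ xstar : X, Tendsto xs atTop (nhds xstar) ∧ ∀ i, F i xstar = y i :=
  loping_landweber_kaczmarz_exact_data_convergence_general F F' x₀ ρ hdiff hscal η hη htcc y hex xs
    hxs0 ω hω hxs
end

section
/- Assume the system F_i(x) = y^i has a solution in B_{ρ/2}(x_0), let x† be its unique solution of minimal distance to x_0, and assume the null-space condition N(F_i'(x†)) ⊆ N(F_i'(x)) for all x ∈ B_ρ(x_0) and all i. Then the eLK iterates with exact data (y^{δ,i} = y^i, δ^i = 0) converge in X^N to the constant vector (x†, …, x†). -/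
/-!
With exact data both thresholds vanish (`ε 0 = 0` by monotonicity and `ε δ → 0`), so each switch
is on whenever its step is nonzero, and since `𝐆 = (λD)*(λD)` an eLK sweep is a Landweber step for
`𝐅(𝐱) = 𝐲` followed by a Landweber step for the linear equation `λD𝐱 = 0`. By the tangential cone
condition the two steps decrease `‖𝐱_n - 𝐱†‖²` by `(1 - 2η)‖𝐅(𝐱_n) - 𝐲‖²` and by `‖λD𝐱_{n+1/2}‖²`,
and they keep every component in `B_{ρ/2}(x†)`: the second one replaces each component by an
average of it and its two cyclic neighbours (`2λ² ≤ 1` when `N ≥ 2`). As for Landweber's method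
(Hanke, Neubauer, Scherzer), comparing `𝐱_m` and `𝐱_l` with the iterate of least residual between
them shows that the iterates are Cauchy; the limit solves `𝐅(𝐱) = 𝐲` and `D𝐱 = 0`, so it is a
constant vector `(x*, …, x*)` with `x*` a solution. Each increment of the iteration is orthogonal
to the constant vector built from any `w` with `F_i'(𝐱_n^i) w = 0` for all `i` and `n`; by the
null-space condition `w = x* - x†` is such a vector, so `x* - x₀ ⊥ x* - x†`, and minimality of
`‖x† - x₀‖` forces `x* = x†`.
-/

open Metric Filter Topology Finset
open scoped RealInnerProductSpace
open ContinuousLinearMap (adjoint adjoint_inner_left adjoint_inner_right)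

/-- The ℓ² product of complete spaces is complete (the `PiLp` uniform structure
is definitionally the product uniform structure). -/
instance piLp_completeSpace {ι : Type*} (p : ENNReal) (α : ι → Type*)
    [∀ i, UniformSpace (α i)] [∀ i, CompleteSpace (α i)] :
    CompleteSpace (PiLp p α) :=
  (PiLp.uniformEquiv p α).completeSpace_iff.2 inferInstance

lemma tendsto_zero_of_norm_sq_le {E : Type*} [SeminormedAddCommGroup E] {a : ℕ → E}
    {t : ℕ → ℝ} (ht : Tendsto t atTop (𝓝 0)) (h : ∀ n, ‖a n‖ ^ 2 ≤ t n) :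
    Tendsto a atTop (𝓝 0) := by
  refine squeeze_zero_norm (fun n => ?_) (by simpa using ht.sqrt)
  simpa using Real.abs_le_sqrt (h n)

lemma ite_pos_norm_smul_eq_self {E F : Type*} [NormedAddCommGroup E] [AddCommGroup F] [Module ℝ F]
    {v : E} {w : F} (h : v = 0 → w = 0) : (if 0 < ‖v‖ then (1 : ℝ) else 0) • w = w := by
  split_ifs with hv
  · exact one_smul ℝ w
  · rw [h (norm_le_zero_iff.1 (not_lt.1 hv)), smul_zero]

lemma MonotoneOn.eq_zero_of_tendsto_nhdsGT {ε : ℝ → ℝ} (hmono : MonotoneOn ε (Set.Ici 0))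
    (hnonneg : 0 ≤ ε 0) (hlim : Tendsto ε (𝓝[>] 0) (𝓝 0)) : ε 0 = 0 :=
  le_antisymm (ge_of_tendsto hlim (eventually_nhdsWithin_of_forall fun _ ht =>
    hmono Set.self_mem_Ici (Set.mem_Ici.2 (le_of_lt ht)) (le_of_lt ht))) hnonneg

section Hilbert

variable {H K : Type*} [NormedAddCommGroup H] [InnerProductSpace ℝ H]
  [NormedAddCommGroup K] [InnerProductSpace ℝ K]

lemma eq_of_inner_sub_eq_zero_of_norm_le {a b : H} (horth : ⟪b, b - a⟫ = 0)
    (hle : ‖a‖ ≤ ‖b‖) : a = b := by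
  have hpyth : ‖a‖ ^ 2 = ‖b‖ ^ 2 + ‖b - a‖ ^ 2 := by
    rw [← sub_sub_cancel b a, norm_sub_sq_real, sub_sub_cancel, horth]; ring
  have hzero : ‖b - a‖ = 0 := by nlinarith [norm_nonneg a, norm_nonneg (b - a)]
  exact (sub_eq_zero.1 (norm_eq_zero.1 hzero)).symm

lemma norm_adjoint_apply_le_s13 [CompleteSpace H] [CompleteSpace K] {A : H →L[ℝ] K} (hA : ‖A‖ ≤ 1)
    (r : K) : ‖adjoint A r‖ ≤ ‖r‖ := by
  simpa using (adjoint A).le_of_opNorm_le (c := 1) (by rwa [LinearIsometryEquiv.norm_map]) r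

lemma norm_sub_adjoint_sq_le [CompleteSpace H] [CompleteSpace K] {A : H →L[ℝ] K}
    (hA : ‖A‖ ≤ 1) {e : H} {r : K} {η : ℝ} (h : ‖r - A e‖ ≤ η * ‖r‖) :
    ‖e - adjoint A r‖ ^ 2 ≤ ‖e‖ ^ 2 - (1 - 2 * η) * ‖r‖ ^ 2 := by
  have hinner : ⟪e, adjoint A r⟫ = ‖r‖ ^ 2 - ⟪r - A e, r⟫ := by
    rw [adjoint_inner_right, inner_sub_left,
      real_inner_self_eq_norm_sq, real_inner_comm]; ring
  have hcross : ⟪r - A e, r⟫ ≤ η * ‖r‖ * ‖r‖ :=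
    (real_inner_le_norm _ _).trans (mul_le_mul_of_nonneg_right h (norm_nonneg r))
  rw [norm_sub_sq_real, hinner]
  nlinarith [norm_nonneg (adjoint A r), norm_adjoint_apply_le_s13 hA r]

lemma summable_of_add_mul_le {d t : ℕ → ℝ} {c : ℝ} (hc : 0 < c) (hd : ∀ n, 0 ≤ d n)
    (ht : ∀ n, 0 ≤ t n) (hdesc : ∀ n, d (n + 1) + c * t n ≤ d n) : Summable t := by
  have hpartial : ∀ n, d n + c * ∑ i ∈ range n, t i ≤ d 0 := by
    intro n
    induction n with
    | zero => simp
    | succ n ih => rw [sum_range_succ]; linarith [hdesc n]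
  refine summable_of_sum_range_le ht (c := d 0 / c) fun n => ?_
  rw [le_div_iff₀ hc]
  linarith [hpartial n, hd n]

lemma abs_inner_sub_le_sum {x : ℕ → H} {t : ℕ → ℝ} {z : H} {C : ℝ} {m l : ℕ} (hml : m ≤ l)
    (h : ∀ n ∈ Ico m l, |⟪x n - x (n + 1), z⟫| ≤ C * t n) :
    |⟪x l - x m, z⟫| ≤ C * ∑ n ∈ Ico m l, t n := by
  induction l, hml using Nat.le_induction with
  | base => simp
  | succ l hml ih =>
    have hstep : ⟪x (l + 1) - x m, z⟫ = ⟪x l - x m, z⟫ - ⟪x l - x (l + 1), z⟫ := by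
      rw [← inner_sub_left]; congr 1; abel
    rw [sum_Ico_succ_top hml, mul_add, hstep]
    exact (abs_sub _ _).trans (add_le_add
      (ih fun n hn => h n (Ico_subset_Ico_right l.le_succ hn))
      (h l (mem_Ico.2 ⟨hml, l.lt_succ_self⟩)))

lemma norm_sub_sq_eq_sub_add_inner_s13 (a b : H) :
    ‖a - b‖ ^ 2 = ‖a‖ ^ 2 - ‖b‖ ^ 2 + 2 * ⟪b - a, b⟫ := by
  rw [norm_sub_sq_real, inner_sub_left, real_inner_self_eq_norm_sq, real_inner_comm]
  ring

section Descent

variable {x : ℕ → H} {xd : H} {t : ℕ → ℝ} {C : ℝ}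

lemma norm_sub_sq_le_of_forall_Ico_left {m k : ℕ} (hmk : m ≤ k)
    (h : ∀ n ∈ Ico m k, |⟪x n - x (n + 1), x k - xd⟫| ≤ C * t n) :
    ‖x k - x m‖ ^ 2 ≤ ‖x m - xd‖ ^ 2 - ‖x k - xd‖ ^ 2 + 2 * C * ∑ n ∈ Ico m k, t n := by
  have hinner := abs_inner_sub_le_sum hmk h
  rw [norm_sub_rev, ← sub_sub_sub_cancel_right (x m) (x k) xd, norm_sub_sq_eq_sub_add_inner_s13,
    sub_sub_sub_cancel_right]
  linarith [le_abs_self ⟪x k - x m, x k - xd⟫]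

lemma norm_sub_sq_le_of_forall_Ico_right {k l : ℕ} (hkl : k ≤ l)
    (h : ∀ n ∈ Ico k l, |⟪x n - x (n + 1), x k - xd⟫| ≤ C * t n) :
    ‖x l - x k‖ ^ 2 ≤ ‖x l - xd‖ ^ 2 - ‖x k - xd‖ ^ 2 + 2 * C * ∑ n ∈ Ico k l, t n := by
  have hinner := abs_inner_sub_le_sum hkl h
  rw [← sub_sub_sub_cancel_right (x l) (x k) xd, norm_sub_sq_eq_sub_add_inner_s13,
    sub_sub_sub_cancel_right, ← neg_sub (x l), inner_neg_left]
  linarith [neg_abs_le ⟪x l - x k, x k - xd⟫]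

theorem cauchySeq_of_descent_of_abs_inner_le {μ : ℕ → ℝ} {c : ℝ} (hc : 0 < c)
    (ht : ∀ n, 0 ≤ t n) (hdesc : ∀ n, ‖x (n + 1) - xd‖ ^ 2 + c * t n ≤ ‖x n - xd‖ ^ 2)
    (hcross : ∀ n k, μ k ≤ μ n → |⟪x n - x (n + 1), x k - xd⟫| ≤ C * t n) :
    CauchySeq x := by
  set d : ℕ → ℝ := fun n => ‖x n - xd‖ ^ 2
  have hanti : Antitone d := antitone_nat_of_succ_le fun n => by
    linarith [hdesc n, mul_nonneg hc.le (ht n)]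
  have hdlim := tendsto_atTop_ciInf hanti ⟨0, by rintro _ ⟨n, rfl⟩; exact sq_nonneg _⟩
  have hSlim :=
    (summable_of_add_mul_le (d := d) hc (fun _ => sq_nonneg _) ht hdesc).hasSum.tendsto_sum_nat
  -- Split `x l - x M` at the index `k ∈ [M, l]` of least `μ`: both pieces are controlled by
  -- increments of the convergent sequence `p`.
  set p : ℕ → ℝ := fun n => d n - 2 * C * ∑ i ∈ range n, t i
  have hp : CauchySeq p := (hdlim.sub (hSlim.const_mul (2 * C))).cauchySeq
  refine Metric.cauchySeq_iff'.2 fun ε hε => ?_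
  obtain ⟨M, hM⟩ := Metric.cauchySeq_iff.1 hp ((ε / 2) ^ 2) (by positivity)
  refine ⟨M, fun l hl => ?_⟩
  obtain ⟨k, hk, hkmin⟩ := exists_min_image (Icc M l) μ ⟨M, mem_Icc.2 ⟨le_rfl, hl⟩⟩
  obtain ⟨hMk, hkl⟩ := mem_Icc.1 hk
  have hleft := norm_sub_sq_le_of_forall_Ico_left hMk fun n hn => hcross n k <|
    hkmin n (mem_Icc.2 ⟨(mem_Ico.1 hn).1, (mem_Ico.1 hn).2.le.trans hkl⟩)
  have hright := norm_sub_sq_le_of_forall_Ico_right hkl fun n hn => hcross n k <|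
    hkmin n (mem_Icc.2 ⟨hMk.trans (mem_Ico.1 hn).1, (mem_Ico.1 hn).2.le⟩)
  rw [sum_Ico_eq_sub t hMk] at hleft
  rw [sum_Ico_eq_sub t hkl] at hright
  have hpk := abs_lt.1 (hM M le_rfl k hMk)
  have hpl := abs_lt.1 (hM k hMk l hl)
  have hkM : ‖x k - x M‖ < ε / 2 :=
    lt_of_pow_lt_pow_left₀ 2 (by positivity) (by simp only [p, d] at hpk; linarith)
  have hlk : ‖x l - x k‖ < ε / 2 :=
    lt_of_pow_lt_pow_left₀ 2 (by positivity) (by simp only [p, d] at hpl; linarith [hanti hkl])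
  rw [dist_eq_norm, ← sub_add_sub_cancel (x l) (x k)]
  exact (norm_add_le _ _).trans_lt (by linarith)

end Descent

lemma smul_sq_adjoint_comp [CompleteSpace H] [CompleteSpace K] (lam : ℝ) (D : H →L[ℝ] K) :
    (lam ^ 2) • (adjoint D).comp D = (adjoint (lam • D)).comp (lam • D) := by
  ext v
  simp [smul_smul, sq]

def TangentialConeCondition (F : H → K) (F' : H → H →L[ℝ] K) (η : ℝ) (S : Set H) : Prop :=
  ∀ u ∈ S, ∀ v ∈ S, ‖F u - F v - F' u (u - v)‖ ≤ η * ‖F u - F v‖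

namespace TangentialConeCondition

variable {F : H → K} {F' : H → H →L[ℝ] K} {η : ℝ} {S : Set H} {u v : H}

lemma mono {T : Set H} (h : TangentialConeCondition F F' η S) (hTS : T ⊆ S) :
    TangentialConeCondition F F' η T :=
  fun u hu v hv => h u (hTS hu) v (hTS hv)

lemma mono_const {η' : ℝ} (h : TangentialConeCondition F F' η S) (hη : η ≤ η') :
    TangentialConeCondition F F' η' S :=
  fun u hu v hv => (h u hu v hv).trans (mul_le_mul_of_nonneg_right hη (norm_nonneg _))

lemma norm_apply_sub_le (h : TangentialConeCondition F F' η S) (hu : u ∈ S) (hv : v ∈ S) :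
    ‖F' u (u - v)‖ ≤ (1 + η) * ‖F u - F v‖ := by
  have := norm_le_norm_add_norm_sub' (F' u (u - v)) (F u - F v)
  rw [norm_sub_rev (F' u (u - v))] at this
  linarith [h u hu v hv]

lemma one_sub_mul_norm_sub_le (h : TangentialConeCondition F F' η S) (hu : u ∈ S) (hv : v ∈ S)
    (hF' : ‖F' u‖ ≤ 1) : (1 - η) * ‖F u - F v‖ ≤ ‖u - v‖ := by
  have := norm_sub_norm_le (F u - F v) (F' u (u - v))
  have hlin : ‖F' u (u - v)‖ ≤ ‖u - v‖ := by simpa using (F' u).le_of_opNorm_le hF' (u - v)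
  linarith [h u hu v hv]

lemma apply_sub_eq_zero (h : TangentialConeCondition F F' η S) (hu : u ∈ S) (hv : v ∈ S)
    (hFuv : F u = F v) : F' u (u - v) = 0 := by
  have := h u hu v hv
  rw [hFuv, sub_self, norm_zero, mul_zero, zero_sub, norm_neg] at this
  exact norm_le_zero_iff.1 this

lemma tendsto_apply (h : TangentialConeCondition F F' η S) (hη : η < 1)
    (hF' : ∀ u ∈ S, ‖F' u‖ ≤ 1) {x : ℕ → H} {xs : H} (hxS : ∀ n, x n ∈ S) (hxs : xs ∈ S)
    (hlim : Tendsto x atTop (𝓝 xs)) : Tendsto (fun n => F (x n)) atTop (𝓝 (F xs)) := by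
  rw [tendsto_iff_norm_sub_tendsto_zero] at hlim ⊢
  refine squeeze_zero (fun n => norm_nonneg _) (fun n => ?_) (by simpa using hlim.div_const (1 - η))
  rw [le_div_iff₀ (by linarith), mul_comm]
  exact h.one_sub_mul_norm_sub_le (hxS n) hxs (hF' _ (hxS n))

variable [CompleteSpace H] [CompleteSpace K] {y : K} {xd : H}

lemma norm_sub_adjoint_sub_sq_le (h : TangentialConeCondition F F' η S) (hu : u ∈ S)
    (hxd : xd ∈ S) (hFxd : F xd = y) (hF' : ‖F' u‖ ≤ 1) :
    ‖u - adjoint (F' u) (F u - y) - xd‖ ^ 2 ≤ ‖u - xd‖ ^ 2 - (1 - 2 * η) * ‖F u - y‖ ^ 2 := by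
  rw [sub_right_comm]
  exact norm_sub_adjoint_sq_le hF' (by simpa [hFxd] using h u hu xd hxd)

lemma sub_adjoint_mem_closedBall {r : ℝ} (h : TangentialConeCondition F F' η (closedBall xd r))
    (hη : η ≤ 1 / 2) (hu : u ∈ closedBall xd r) (hFxd : F xd = y) (hF' : ‖F' u‖ ≤ 1) :
    u - adjoint (F' u) (F u - y) ∈ closedBall xd r := by
  have hdesc := h.norm_sub_adjoint_sub_sq_le hu
    (mem_closedBall_self (nonneg_of_mem_closedBall hu)) hFxd hF'
  rw [mem_closedBall_iff_norm] at hu ⊢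
  nlinarith [sq_nonneg ‖F u - y‖, norm_nonneg (u - adjoint (F' u) (F u - y) - xd),
    norm_nonneg (u - xd)]

end TangentialConeCondition

lemma eq_of_forall_ker_inner_eq_zero {ι : Type*} {F : ι → H → K} {F' : ι → H → H →L[ℝ] K}
    {η : ℝ} {S : Set H} (htcc : ∀ i, TangentialConeCondition (F i) (F' i) η S)
    {x₀ xd z : H} (hxd : xd ∈ S) (hz : z ∈ S) (hsol : ∀ i, F i z = F i xd)
    (hkern : ∀ i, ∀ u ∈ S, LinearMap.ker (F' i xd : H →ₗ[ℝ] K) ≤ LinearMap.ker (F' i u : H →ₗ[ℝ] K))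
    (hmin : ‖xd - x₀‖ ≤ ‖z - x₀‖)
    (horth : ∀ w, (∀ i, ∀ u ∈ S, F' i u w = 0) → ⟪z - x₀, w⟫ = 0) : z = xd := by
  have hker : ∀ i, ∀ u ∈ S, F' i u (z - xd) = 0 := fun i u hu => hkern i u hu <| by
    rw [LinearMap.mem_ker, ContinuousLinearMap.coe_coe, ← neg_sub, map_neg,
      (htcc i).apply_sub_eq_zero hxd hz (hsol i).symm, neg_zero]
  have := eq_of_inner_sub_eq_zero_of_norm_le (by simpa using horth _ hker) hmin
  exact (sub_left_inj.1 this).symm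

variable {L : Type*} [NormedAddCommGroup L] [InnerProductSpace ℝ L]
  [CompleteSpace H] [CompleteSpace K] [CompleteSpace L]

structure IsEmbeddedLandweberSeq (F : H → K) (F' : H → H →L[ℝ] K) (B : H →L[ℝ] L) (y : K)
    (x xh : ℕ → H) : Prop where
  half : ∀ n, xh n = x n - adjoint (F' (x n)) (F (x n) - y)
  full : ∀ n, x (n + 1) = xh n - adjoint B (B (xh n))

namespace IsEmbeddedLandweberSeq

variable {F : H → K} {F' : H → H →L[ℝ] K} {B : H →L[ℝ] L} {y : K} {x xh : ℕ → H}
  {η : ℝ} {S : Set H} {xd : H}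

lemma of_ite
    (hhalf : ∀ n, xh n = x n -
      (if 0 < ‖F (x n) - y‖ then (1 : ℝ) else 0) • adjoint (F' (x n)) (F (x n) - y))
    (hfull : ∀ n, x (n + 1) = xh n -
      (if 0 < ‖adjoint B (B (xh n))‖ then (1 : ℝ) else 0) • adjoint B (B (xh n))) :
    IsEmbeddedLandweberSeq F F' B y x xh :=
  ⟨fun n => by rw [hhalf, ite_pos_norm_smul_eq_self fun h => by rw [h, map_zero]],
    fun n => by rw [hfull, ite_pos_norm_smul_eq_self id]⟩

lemma inner_sub_zero_eq_zero (h : IsEmbeddedLandweberSeq F F' B y x xh) {w : H}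
    (hw : ∀ n, F' (x n) w = 0) (hBw : B w = 0) (n : ℕ) : ⟪x n - x 0, w⟫ = 0 := by
  induction n with
  | zero => simp
  | succ n ih =>
    have hstep : x (n + 1) - x 0 =
        (x n - x 0) - adjoint (F' (x n)) (F (x n) - y) - adjoint B (B (xh n)) := by
      rw [h.full, h.half]; abel
    rw [hstep, inner_sub_left, inner_sub_left, adjoint_inner_left, adjoint_inner_left, hw, hBw,
      ih, inner_zero_right, inner_zero_right, sub_zero, sub_zero]

lemma norm_succ_sub_sq_add_le (h : IsEmbeddedLandweberSeq F F' B y x xh)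
    (htcc : TangentialConeCondition F F' η S) (hη : 0 ≤ η) {n : ℕ} (hn : x n ∈ S) (hxd : xd ∈ S)
    (hFxd : F xd = y) (hBxd : B xd = 0) (hF' : ‖F' (x n)‖ ≤ 1) (hB : ‖B‖ ≤ 1) :
    ‖x (n + 1) - xd‖ ^ 2 + (1 - 2 * η) * (‖F (x n) - y‖ ^ 2 + ‖B (xh n)‖ ^ 2) ≤
      ‖x n - xd‖ ^ 2 := by
  have hhalf := htcc.norm_sub_adjoint_sub_sq_le hn hxd hFxd hF'
  rw [← h.half] at hhalf
  have hfull : ‖x (n + 1) - xd‖ ^ 2 ≤ ‖xh n - xd‖ ^ 2 - ‖B (xh n)‖ ^ 2 := by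
    rw [h.full, sub_right_comm]
    simpa using norm_sub_adjoint_sq_le hB (e := xh n - xd) (r := B (xh n)) (η := 0)
      (by simp [hBxd])
  nlinarith [mul_nonneg hη (sq_nonneg ‖B (xh n)‖)]

lemma abs_inner_sub_succ_le (h : IsEmbeddedLandweberSeq F F' B y x xh)
    (htcc : TangentialConeCondition F F' η S) (hη : 0 ≤ η) {n k : ℕ} (hn : x n ∈ S)
    (hk : x k ∈ S) (hxd : xd ∈ S) (hFxd : F xd = y) (hBxd : B xd = 0) (hF' : ‖F' (x n)‖ ≤ 1)
    (hB : ‖B‖ ≤ 1)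
    (hμ : ‖F (x k) - y‖ ^ 2 + ‖B (x k)‖ ^ 2 ≤ ‖F (x n) - y‖ ^ 2 + ‖B (x n)‖ ^ 2) :
    |⟪x n - x (n + 1), x k - xd⟫| ≤ (6 + 4 * η) * (‖F (x n) - y‖ ^ 2 + ‖B (xh n)‖ ^ 2) := by
  set r := F (x n) - y
  set A := F' (x n)
  have hinner : ⟪x n - x (n + 1), x k - xd⟫ = ⟪r, A (x k - xd)⟫ + ⟪B (xh n), B (x k)⟫ := by
    have hstep : x n - x (n + 1) = adjoint A r + adjoint B (B (xh n)) := by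
      rw [h.full, h.half]; abel
    rw [hstep, inner_add_left, adjoint_inner_left, adjoint_inner_left, map_sub B, hBxd, sub_zero]
  have hAe : ‖A (x k - xd)‖ ≤ (1 + η) * (2 * ‖r‖ + ‖F (x k) - y‖) := by
    have hsol := htcc.norm_apply_sub_le hn hxd
    have hiter := htcc.norm_apply_sub_le hn hk
    have hres : ‖F (x n) - F (x k)‖ ≤ ‖r‖ + ‖F (x k) - y‖ := by
      simpa [r] using norm_sub_le r (F (x k) - y)
    rw [hFxd] at hsol
    rw [show x k - xd = (x n - xd) - (x n - x k) by abel, map_sub]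
    nlinarith [norm_sub_le (A (x n - xd)) (A (x n - x k))]
  have hBx : ‖B (x n)‖ ≤ ‖B (xh n)‖ + ‖r‖ := by
    have hBAr : ‖B (adjoint A r)‖ ≤ ‖r‖ :=
      ((B.le_of_opNorm_le hB _).trans_eq (one_mul _)).trans (norm_adjoint_apply_le_s13 hF' r)
    rw [show x n = xh n + adjoint A r by rw [h.half]; abel, map_add]
    linarith [norm_add_le (B (xh n)) (B (adjoint A r))]
  have hμ' : ‖F (x k) - y‖ ^ 2 + ‖B (x k)‖ ^ 2 ≤ 3 * ‖r‖ ^ 2 + 2 * ‖B (xh n)‖ ^ 2 := by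
    nlinarith [norm_nonneg (B (x n)), sq_nonneg (‖B (xh n)‖ - ‖r‖)]
  have hres : ‖r‖ * ‖F (x k) - y‖ ≤ 2 * (‖r‖ ^ 2 + ‖B (xh n)‖ ^ 2) := by
    nlinarith [sq_nonneg (‖r‖ - ‖F (x k) - y‖), sq_nonneg ‖B (x k)‖]
  have hsmooth : ‖B (xh n)‖ * ‖B (x k)‖ ≤ 2 * (‖r‖ ^ 2 + ‖B (xh n)‖ ^ 2) := by
    nlinarith [sq_nonneg (‖B (xh n)‖ - ‖B (x k)‖), sq_nonneg ‖F (x k) - y‖, sq_nonneg ‖r‖]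
  have hlin : |⟪r, A (x k - xd)⟫| ≤ (1 + η) * (2 * ‖r‖ ^ 2 + ‖r‖ * ‖F (x k) - y‖) := by
    refine (abs_real_inner_le_norm _ _).trans ?_
    nlinarith [mul_le_mul_of_nonneg_left hAe (norm_nonneg r)]
  rw [hinner]
  refine (abs_add_le _ _).trans ?_
  nlinarith [abs_real_inner_le_norm (B (xh n)) (B (x k)), sq_nonneg ‖B (xh n)‖]

theorem exists_tendsto (h : IsEmbeddedLandweberSeq F F' B y x xh)
    (htcc : TangentialConeCondition F F' η S) (hη₀ : 0 ≤ η) (hη : η < 1 / 2) (hS : IsClosed S)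
    (hxS : ∀ n, x n ∈ S) (hxd : xd ∈ S) (hFxd : F xd = y) (hBxd : B xd = 0)
    (hF' : ∀ u ∈ S, ‖F' u‖ ≤ 1) (hB : ‖B‖ ≤ 1) :
    ∃ xs ∈ S, Tendsto x atTop (𝓝 xs) ∧ F xs = y ∧ B xs = 0 ∧
      ∀ w, (∀ n, F' (x n) w = 0) → B w = 0 → ⟪xs - x 0, w⟫ = 0 := by
  set t : ℕ → ℝ := fun n => ‖F (x n) - y‖ ^ 2 + ‖B (xh n)‖ ^ 2
  have ht : ∀ n, 0 ≤ t n := fun n => by positivity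
  have hc : 0 < 1 - 2 * η := by linarith
  have hdesc : ∀ n, ‖x (n + 1) - xd‖ ^ 2 + (1 - 2 * η) * t n ≤ ‖x n - xd‖ ^ 2 := fun n =>
    h.norm_succ_sub_sq_add_le htcc hη₀ (hxS n) hxd hFxd hBxd (hF' _ (hxS n)) hB
  obtain ⟨xs, hlim⟩ := cauchySeq_tendsto_of_complete <|
    cauchySeq_of_descent_of_abs_inner_le (μ := fun n => ‖F (x n) - y‖ ^ 2 + ‖B (x n)‖ ^ 2)
      hc ht hdesc fun n k hμ =>
        h.abs_inner_sub_succ_le htcc hη₀ (hxS n) (hxS k) hxd hFxd hBxd (hF' _ (hxS n)) hB hμ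
  have hxs : xs ∈ S := hS.mem_of_tendsto hlim (Eventually.of_forall hxS)
  have ht₀ : Tendsto t atTop (𝓝 0) := (summable_of_add_mul_le (d := fun n => ‖x n - xd‖ ^ 2)
    hc (fun _ => sq_nonneg _) ht hdesc).tendsto_atTop_zero
  have hres : Tendsto (fun n => F (x n) - y) atTop (𝓝 0) :=
    tendsto_zero_of_norm_sq_le ht₀ fun n => le_add_of_nonneg_right (sq_nonneg _)
  have hsmooth : Tendsto (fun n => B (xh n)) atTop (𝓝 0) :=
    tendsto_zero_of_norm_sq_le ht₀ fun n => le_add_of_nonneg_left (sq_nonneg _)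
  have hlim_half : Tendsto xh atTop (𝓝 xs) := by
    have hgap : Tendsto (fun n => adjoint (F' (x n)) (F (x n) - y)) atTop (𝓝 0) :=
      squeeze_zero_norm (fun n => norm_adjoint_apply_le_s13 (hF' _ (hxS n)) _)
        (tendsto_zero_iff_norm_tendsto_zero.1 hres)
    have := hlim.sub hgap
    rw [sub_zero] at this
    exact this.congr fun n => (h.half n).symm
  refine ⟨xs, hxs, hlim, ?_, ?_, fun w hw hBw => ?_⟩
  · exact tendsto_nhds_unique (htcc.tendsto_apply (by linarith) hF' hxS hxs hlim)
      (by simpa using hres.add_const y)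
  · exact tendsto_nhds_unique ((B.continuous.tendsto xs).comp hlim_half) hsmooth
  · exact tendsto_nhds_unique ((hlim.sub_const (x 0)).inner tendsto_const_nhds)
      (by simp [h.inner_sub_zero_eq_zero hw hBw])

end IsEmbeddedLandweberSeq

end Hilbert

lemma PiLp.isClosed_setOf_forall_apply_mem {ι X : Type*} [TopologicalSpace X] {s : Set X}
    (hs : IsClosed s) : IsClosed {v : PiLp 2 (fun _ : ι => X) | ∀ i, v i ∈ s} := by
  simp only [Set.ofPred_forall]
  exact isClosed_iInter fun i => hs.preimage (PiLp.continuous_apply 2 _ i)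

section PiLp

variable {ι : Type*} [Fintype ι] {X Y : Type*} [NormedAddCommGroup X] [InnerProductSpace ℝ X]
  [NormedAddCommGroup Y] [InnerProductSpace ℝ Y]
  {T : PiLp 2 (fun _ : ι => X) →L[ℝ] PiLp 2 (fun _ : ι => Y)} {A : ι → X →L[ℝ] Y}

lemma PiLp.adjoint_apply_of_apply_eq [CompleteSpace X] [CompleteSpace Y]
    (hT : ∀ v i, T v i = A i (v i)) (u : PiLp 2 (fun _ : ι => Y)) (i : ι) :
    adjoint T u i = adjoint (A i) (u i) := by
  suffices adjoint T u = WithLp.toLp 2 (fun i => adjoint (A i) (u i)) by rw [this]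
  refine ext_inner_right ℝ fun v => ?_
  simp only [adjoint_inner_left, PiLp.inner_apply, hT]

lemma PiLp.opNorm_le_of_apply_eq (hT : ∀ v i, T v i = A i (v i)) {C : ℝ} (hC : 0 ≤ C)
    (hA : ∀ i, ‖A i‖ ≤ C) : ‖T‖ ≤ C := by
  refine T.opNorm_le_bound hC fun v => ?_
  rw [← sq_le_sq₀ (norm_nonneg _) (by positivity), mul_pow, PiLp.norm_sq_eq_of_L2,
    PiLp.norm_sq_eq_of_L2, mul_sum]
  gcongr with i
  rw [hT, ← mul_pow]
  gcongr
  exact (A i).le_of_opNorm_le (hA i) _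

lemma TangentialConeCondition.piLp {F : ι → X → Y} {F' : ι → X → X →L[ℝ] Y}
    {bF : PiLp 2 (fun _ : ι => X) → PiLp 2 (fun _ : ι => Y)}
    {bF' : PiLp 2 (fun _ : ι => X) → PiLp 2 (fun _ : ι => X) →L[ℝ] PiLp 2 (fun _ : ι => Y)}
    (hbF : ∀ v i, bF v i = F i (v i)) (hbF' : ∀ v h i, bF' v h i = F' i (v i) (h i))
    {η : ℝ} (hη : 0 ≤ η) {S : Set X} (h : ∀ i, TangentialConeCondition (F i) (F' i) η S) :
    TangentialConeCondition bF bF' η {v | ∀ i, v i ∈ S} := by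
  intro u hu v hv
  rw [← sq_le_sq₀ (norm_nonneg _) (by positivity), mul_pow, PiLp.norm_sq_eq_of_L2,
    PiLp.norm_sq_eq_of_L2, mul_sum]
  gcongr with i
  simp only [PiLp.sub_apply, hbF, hbF']
  rw [← mul_pow]
  gcongr
  exact h i _ (hu i) _ (hv i)

end PiLp

section Cyclic

variable {X : Type*} [NormedAddCommGroup X] [InnerProductSpace ℝ X] {N : ℕ} [NeZero N]

def IsCyclicDiff (D : PiLp 2 (fun _ : Fin N => X) →L[ℝ] PiLp 2 (fun _ : Fin N => X)) : Prop :=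
  ∀ v i, D v i = v (i + 1) - v i

namespace IsCyclicDiff

variable {D : PiLp 2 (fun _ : Fin N => X) →L[ℝ] PiLp 2 (fun _ : Fin N => X)}

lemma apply_toLp_const (hD : IsCyclicDiff D) (c : X) : D (WithLp.toLp 2 fun _ => c) = 0 :=
  PiLp.ext fun i => by rw [hD]; exact sub_self c

lemma apply_eq_apply_zero (hD : IsCyclicDiff D) {v : PiLp 2 (fun _ : Fin N => X)} (hv : D v = 0)
    (i : Fin N) : v i = v 0 := by
  have hsucc : ∀ j : Fin N, v (j + 1) = v j := fun j => sub_eq_zero.1 (by rw [← hD, hv]; rfl)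
  obtain ⟨n, rfl⟩ := Nat.exists_eq_succ_of_ne_zero (NeZero.ne N)
  induction i using Fin.induction with
  | zero => rfl
  | succ j ih => rw [← Fin.coeSucc_eq_succ, hsucc, ih]

variable [CompleteSpace X]

lemma adjoint_apply (hD : IsCyclicDiff D) (w : PiLp 2 (fun _ : Fin N => X)) (i : Fin N) :
    adjoint D w i = w (i - 1) - w i := by
  suffices adjoint D w = WithLp.toLp 2 (fun i => w (i - 1) - w i) by rw [this]
  refine ext_inner_right ℝ fun v => ?_
  simp only [adjoint_inner_left, PiLp.inner_apply, hD _ _, inner_sub_left, inner_sub_right,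
    sum_sub_distrib]
  congr 1
  exact Fintype.sum_equiv (Equiv.addRight 1) _ _ fun i => by simp

lemma adjoint_smul_apply_smul_apply (hD : IsCyclicDiff D) (lam : ℝ)
    (v : PiLp 2 (fun _ : Fin N => X)) (i : Fin N) :
    adjoint (lam • D) ((lam • D) v) i = lam ^ 2 • ((v i - v (i - 1)) - (v (i + 1) - v i)) := by
  simp [hD.adjoint_apply, hD _ _, smul_smul, sq]

lemma two_mul_sq_le_one [Nontrivial X] (hD : IsCyclicDiff D) (hN : 2 ≤ N) {lam : ℝ}
    (hlamD : ‖lam • D‖ ≤ 1) : 2 * lam ^ 2 ≤ 1 := by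
  obtain ⟨u, hu⟩ := exists_norm_eq X zero_le_one
  have h10 : (1 : Fin N) ≠ 0 := by
    obtain ⟨n, rfl⟩ := Nat.exists_eq_add_of_le' hN
    exact Fin.zero_lt_one.ne'
  set v : PiLp 2 (fun _ : Fin N => X) := PiLp.single 2 0 u
  have hv0 : adjoint (lam • D) ((lam • D) v) 0 = (2 * lam ^ 2) • u := by
    rw [hD.adjoint_smul_apply_smul_apply]
    simp [v, h10]
    module
  have hle : ‖adjoint (lam • D) ((lam • D) v)‖ ≤ ‖v‖ :=
    (norm_adjoint_apply_le_s13 hlamD _).trans (((lam • D).le_of_opNorm_le hlamD v).trans_eq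
      (one_mul _))
  have := (PiLp.norm_apply_le _ 0).trans hle
  rwa [hv0, norm_smul, hu, PiLp.norm_single, hu, Real.norm_of_nonneg (by positivity),
    mul_one] at this

lemma sub_adjoint_smul_apply_smul_mem_closedBall (hD : IsCyclicDiff D) {lam : ℝ}
    (hlamD : ‖lam • D‖ ≤ 1) {v : PiLp 2 (fun _ : Fin N => X)} {c : X} {R : ℝ}
    (hv : ∀ i, v i ∈ closedBall c R) (i : Fin N) :
    (v - adjoint (lam • D) ((lam • D) v)) i ∈ closedBall c R := by
  rcases subsingleton_or_nontrivial X with hX | hX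
  · rw [Subsingleton.elim ((v - _) i) c]
    exact mem_closedBall_self (nonneg_of_mem_closedBall (hv i))
  have hcomb : (v - adjoint (lam • D) ((lam • D) v)) i - c = (1 - 2 * lam ^ 2) • (v i - c)
      + lam ^ 2 • (v (i - 1) - c) + lam ^ 2 • (v (i + 1) - c) := by
    rw [PiLp.sub_apply, hD.adjoint_smul_apply_smul_apply]
    module
  simp only [mem_closedBall_iff_norm] at hv ⊢
  rcases (Nat.one_le_iff_ne_zero.2 (NeZero.ne N)).eq_or_lt with hN | hN
  · have : Subsingleton (Fin N) := by subst hN; infer_instance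
    rw [hcomb, Subsingleton.elim (i - 1) i, Subsingleton.elim (i + 1) i,
      show ∀ a : X, (1 - 2 * lam ^ 2) • a + lam ^ 2 • a + lam ^ 2 • a = a by intro; module]
    exact hv i
  have hlam := hD.two_mul_sq_le_one hN hlamD
  rw [hcomb]
  refine (norm_add₃_le ..).trans ?_
  simp only [norm_smul, Real.norm_of_nonneg (sq_nonneg lam),
    Real.norm_of_nonneg (sub_nonneg.2 hlam)]
  nlinarith [hv i, hv (i - 1), hv (i + 1), sq_nonneg lam]

end IsCyclicDiff

end Cyclic

theorem IsEmbeddedLandweberSeq.apply_mem_closedBall {X Y : Type*} [NormedAddCommGroup X]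
    [InnerProductSpace ℝ X] [CompleteSpace X] [NormedAddCommGroup Y] [InnerProductSpace ℝ Y]
    [CompleteSpace Y] {N : ℕ} [NeZero N] {F : Fin N → X → Y} {F' : Fin N → X → X →L[ℝ] Y}
    {bF : PiLp 2 (fun _ : Fin N => X) → PiLp 2 (fun _ : Fin N => Y)}
    {bF' : PiLp 2 (fun _ : Fin N => X) →
      PiLp 2 (fun _ : Fin N => X) →L[ℝ] PiLp 2 (fun _ : Fin N => Y)}
    (hbF : ∀ v i, bF v i = F i (v i)) (hbF' : ∀ v h i, bF' v h i = F' i (v i) (h i))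
    {D : PiLp 2 (fun _ : Fin N => X) →L[ℝ] PiLp 2 (fun _ : Fin N => X)} (hD : IsCyclicDiff D)
    {lam : ℝ} (hlamD : ‖lam • D‖ ≤ 1) {y : PiLp 2 (fun _ : Fin N => Y)}
    {x xh : ℕ → PiLp 2 (fun _ : Fin N => X)} (h : IsEmbeddedLandweberSeq bF bF' (lam • D) y x xh)
    {η : ℝ} (hη : η ≤ 1 / 2) {xd : X} {r : ℝ}
    (htcc : ∀ i, TangentialConeCondition (F i) (F' i) η (closedBall xd r))
    (hF' : ∀ i, ∀ z ∈ closedBall xd r, ‖F' i z‖ ≤ 1) (hsol : ∀ i, F i xd = y i)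
    (h₀ : ∀ i, x 0 i ∈ closedBall xd r) (n : ℕ) (i : Fin N) : x n i ∈ closedBall xd r := by
  induction n generalizing i with
  | zero => exact h₀ i
  | succ n ih =>
    have hhalf : ∀ i, xh n i ∈ closedBall xd r := fun i => by
      rw [h.half, PiLp.sub_apply, PiLp.adjoint_apply_of_apply_eq (hbF' _), PiLp.sub_apply, hbF]
      exact (htcc i).sub_adjoint_mem_closedBall hη (ih i) (hsol i) (hF' i _ (ih i))
    rw [h.full]
    exact hD.sub_adjoint_smul_apply_smul_mem_closedBall hlamD hhalf i

theorem embedded_landweber_kaczmarz_exact_data_convergence_minimal_distance_general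
    {X Y : Type*} [NormedAddCommGroup X] [InnerProductSpace ℝ X] [CompleteSpace X]
    [NormedAddCommGroup Y] [InnerProductSpace ℝ Y] [CompleteSpace Y]
    {N : ℕ} [NeZero N]
    (F : Fin N → X → Y) (F' : Fin N → X → X →L[ℝ] Y)
    (x₀ : X) (ρ : ℝ)
    (hscal : ∀ i, ∀ z ∈ closedBall x₀ ρ, ‖F' i z‖ ≤ 1)
    (η : ℝ) (hη : η < 1 / 2)
    (htcc : ∀ i, ∀ z ∈ closedBall x₀ ρ, ∀ z' ∈ closedBall x₀ ρ,
      ‖F i z - F i z' - F' i z (z - z')‖ ≤ η * ‖F i z - F i z'‖)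
    (bF : PiLp 2 (fun _ : Fin N => X) → PiLp 2 (fun _ : Fin N => Y))
    (hbF : ∀ (v : PiLp 2 (fun _ : Fin N => X)) (i : Fin N), bF v i = F i (v i))
    (bF' : PiLp 2 (fun _ : Fin N => X) →
      (PiLp 2 (fun _ : Fin N => X) →L[ℝ] PiLp 2 (fun _ : Fin N => Y)))
    (hbF' : ∀ (v h : PiLp 2 (fun _ : Fin N => X)) (i : Fin N),
      bF' v h i = F' i (v i) (h i))
    (D : PiLp 2 (fun _ : Fin N => X) →L[ℝ] PiLp 2 (fun _ : Fin N => X))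
    (hD : ∀ (v : PiLp 2 (fun _ : Fin N => X)) (i : Fin N), D v i = v (i + 1) - v i)
    (lam : ℝ) (hlam : 0 < lam) (hlamD : ‖lam • D‖ ≤ 1)
    (G : PiLp 2 (fun _ : Fin N => X) →L[ℝ] PiLp 2 (fun _ : Fin N => X))
    (hG : G = (lam ^ 2) • ((ContinuousLinearMap.adjoint D).comp D))
    (ε : ℝ → ℝ) (hεmono : StrictMonoOn ε (Set.Ici 0))
    (hεnonneg : ∀ t, 0 ≤ t → 0 ≤ ε t)
    (hεlim : Tendsto ε (nhdsWithin 0 (Set.Ioi 0)) (nhds 0))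
    (τ : ℝ)
    (y : Fin N → Y)
    (hex : ∃ z ∈ closedBall x₀ (ρ / 2), ∀ i, F i z = y i)
    (xdag : X) (hdagsol : ∀ i, F i xdag = y i)
    (hdagmin : ∀ z ∈ closedBall x₀ ρ, (∀ i, F i z = y i) → ‖xdag - x₀‖ ≤ ‖z - x₀‖)
    (hkern : ∀ i, ∀ z ∈ closedBall x₀ ρ,
      LinearMap.ker (F' i xdag : X →ₗ[ℝ] Y) ≤ LinearMap.ker (F' i z : X →ₗ[ℝ] Y))
    (ybar : PiLp 2 (fun _ : Fin N => Y)) (hybar : ∀ i, ybar i = y i)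
    (bxs bxh : ℕ → PiLp 2 (fun _ : Fin N => X))
    (hbxs0 : ∀ i, bxs 0 i = x₀)
    (hhalf : ∀ n, bxh n = bxs n -
      (if 0 < ‖bF (bxs n) - ybar‖ then (1 : ℝ) else 0) •
        (ContinuousLinearMap.adjoint (bF' (bxs n))) (bF (bxs n) - ybar))
    (hfull : ∀ n, bxs (n + 1) = bxh n -
      (if τ * ε 0 < ‖G (bxh n)‖ then (1 : ℝ) else 0) • G (bxh n))
    : Tendsto bxs atTop
        (nhds (WithLp.toLp 2 (fun _ => xdag) : PiLp 2 (fun _ : Fin N => X))) := by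
  subst hG
  have hε₀ : ε 0 = 0 := hεmono.monotoneOn.eq_zero_of_tendsto_nhdsGT (hεnonneg 0 le_rfl) hεlim
  have hseq : IsEmbeddedLandweberSeq bF bF' (lam • D) ybar bxs bxh := .of_ite hhalf fun n => by
    simpa only [hε₀, mul_zero, smul_sq_adjoint_comp, ContinuousLinearMap.comp_apply] using hfull n
  have hD' : IsCyclicDiff D := hD
  have hsol : ∀ i, F i xdag = ybar i := fun i => (hdagsol i).trans (hybar i).symm
  have hxdag : ‖xdag - x₀‖ ≤ ρ / 2 := by
    obtain ⟨z, hz, hzsol⟩ := hex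
    have hρ : 0 ≤ ρ := by linarith [nonneg_of_mem_closedBall hz]
    exact (hdagmin z (closedBall_subset_closedBall (by linarith) hz) hzsol).trans
      (mem_closedBall_iff_norm.1 hz)
  have hnear : closedBall xdag (ρ / 2) ⊆ closedBall x₀ ρ :=
    closedBall_subset_closedBall' (by rw [dist_eq_norm]; linarith)
  have hxdag_mem : xdag ∈ closedBall xdag (ρ / 2) :=
    mem_closedBall_self ((norm_nonneg _).trans hxdag)
  have htcc₀ : ∀ i, TangentialConeCondition (F i) (F' i) η (closedBall x₀ ρ) := htcc
  -- the cone condition for the product operator is derived with a nonnegative constant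
  have htcc' : ∀ i, TangentialConeCondition (F i) (F' i) (max η 0) (closedBall xdag (ρ / 2)) :=
    fun i => ((htcc₀ i).mono_const (le_max_left η 0)).mono hnear
  have hη' : max η 0 < 1 / 2 := max_lt hη one_half_pos
  have hxS := hseq.apply_mem_closedBall hbF hbF' hD' hlamD hη'.le
    htcc' (fun i z hz => hscal i z (hnear hz)) hsol fun i => by
      rwa [hbxs0, mem_closedBall_comm, mem_closedBall_iff_norm]
  obtain ⟨xs, hxsS, hlim, hFxs, hBxs, horth⟩ :=
    hseq.exists_tendsto (xd := WithLp.toLp 2 fun _ => xdag)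
    (.piLp hbF hbF' (le_max_right η 0) htcc') (le_max_right η 0) hη'
    (PiLp.isClosed_setOf_forall_apply_mem isClosed_closedBall) hxS (fun _ => hxdag_mem)
    (PiLp.ext fun i => by rw [hbF, hsol]) (by simp [hD'.apply_toLp_const])
    (fun v hv => PiLp.opNorm_le_of_apply_eq (hbF' v) zero_le_one fun i => hscal i _ (hnear (hv i)))
    hlamD
  have hconst := hD'.apply_eq_apply_zero ((smul_eq_zero.1 hBxs).resolve_left hlam.ne')
  have hxs : xs 0 = xdag := by
    have hxs_sol : ∀ i, F i (xs 0) = F i xdag := fun i => by rw [← hconst i, ← hbF, hFxs, hsol]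
    refine eq_of_forall_ker_inner_eq_zero htcc₀ (hnear hxdag_mem) (hnear (hxsS 0)) hxs_sol hkern
      (hdagmin _ (hnear (hxsS 0)) fun i => (hxs_sol i).trans (hdagsol i)) fun w hw => ?_
    have := horth (WithLp.toLp 2 fun _ => w)
      (fun n => PiLp.ext fun i => by rw [hbF']; exact hw i _ (hnear (hxS n i)))
      (by simp [hD'.apply_toLp_const])
    simpa [PiLp.inner_apply, hconst, hbxs0, NeZero.ne] using this
  rwa [show xs = WithLp.toLp 2 fun _ => xdag from PiLp.ext fun i => by rw [hconst, hxs]] at hlim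

/-- **Convergence of the embedded Landweber–Kaczmarz method for exact data to the
constant vector built from the minimal-distance solution `x†`, under the
null-space condition.** -/
theorem embedded_landweber_kaczmarz_exact_data_convergence_minimal_distance
    {X Y : Type*} [NormedAddCommGroup X] [InnerProductSpace ℝ X] [CompleteSpace X]
    [NormedAddCommGroup Y] [InnerProductSpace ℝ Y] [CompleteSpace Y]
    {N : ℕ} [NeZero N]
    (F : Fin N → X → Y) (F' : Fin N → X → X →L[ℝ] Y)
    (x₀ : X) (ρ : ℝ) (hρ : 0 < ρ)
    (hdiff : ∀ i, ∀ z ∈ closedBall x₀ ρ, HasFDerivAt (F i) (F' i z) z)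
    (hscal : ∀ i, ∀ z ∈ closedBall x₀ ρ, ‖F' i z‖ ≤ 1)
    (η : ℝ) (hη : η < 1 / 2)
    (htcc : ∀ i, ∀ z ∈ closedBall x₀ ρ, ∀ z' ∈ closedBall x₀ ρ,
      ‖F i z - F i z' - F' i z (z - z')‖ ≤ η * ‖F i z - F i z'‖)
    (bF : PiLp 2 (fun _ : Fin N => X) → PiLp 2 (fun _ : Fin N => Y))
    (hbF : ∀ (v : PiLp 2 (fun _ : Fin N => X)) (i : Fin N), bF v i = F i (v i))
    (bF' : PiLp 2 (fun _ : Fin N => X) →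
      (PiLp 2 (fun _ : Fin N => X) →L[ℝ] PiLp 2 (fun _ : Fin N => Y)))
    (hbF' : ∀ (v h : PiLp 2 (fun _ : Fin N => X)) (i : Fin N),
      bF' v h i = F' i (v i) (h i))
    (D : PiLp 2 (fun _ : Fin N => X) →L[ℝ] PiLp 2 (fun _ : Fin N => X))
    (hD : ∀ (v : PiLp 2 (fun _ : Fin N => X)) (i : Fin N), D v i = v (i + 1) - v i)
    (lam : ℝ) (hlam : 0 < lam) (hlamD : ‖lam • D‖ ≤ 1)
    (G : PiLp 2 (fun _ : Fin N => X) →L[ℝ] PiLp 2 (fun _ : Fin N => X))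
    (hG : G = (lam ^ 2) • ((ContinuousLinearMap.adjoint D).comp D))
    (ε : ℝ → ℝ) (hεmono : StrictMonoOn ε (Set.Ici 0))
    (hεnonneg : ∀ t, 0 ≤ t → 0 ≤ ε t)
    (hεlim : Tendsto ε (nhdsWithin 0 (Set.Ioi 0)) (nhds 0))
    (τ : ℝ) (hτ : 2 * (1 + η) / (1 - 2 * η) < τ)
    (y : Fin N → Y)
    (hex : ∃ z ∈ closedBall x₀ (ρ / 2), ∀ i, F i z = y i)
    (xdag : X) (hdagsol : ∀ i, F i xdag = y i)
    (hdagmin : ∀ z ∈ closedBall x₀ ρ, (∀ i, F i z = y i) → ‖xdag - x₀‖ ≤ ‖z - x₀‖)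
    (hdaguniq : ∀ z ∈ closedBall x₀ ρ, (∀ i, F i z = y i) →
      ‖z - x₀‖ = ‖xdag - x₀‖ → z = xdag)
    (hkern : ∀ i, ∀ z ∈ closedBall x₀ ρ,
      LinearMap.ker (F' i xdag : X →ₗ[ℝ] Y) ≤ LinearMap.ker (F' i z : X →ₗ[ℝ] Y))
    (ybar : PiLp 2 (fun _ : Fin N => Y)) (hybar : ∀ i, ybar i = y i)
    (bxs bxh : ℕ → PiLp 2 (fun _ : Fin N => X))
    (hbxs0 : ∀ i, bxs 0 i = x₀)
    (hhalf : ∀ n, bxh n = bxs n -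
      (if 0 < ‖bF (bxs n) - ybar‖ then (1 : ℝ) else 0) •
        (ContinuousLinearMap.adjoint (bF' (bxs n))) (bF (bxs n) - ybar))
    (hfull : ∀ n, bxs (n + 1) = bxh n -
      (if τ * ε 0 < ‖G (bxh n)‖ then (1 : ℝ) else 0) • G (bxh n))
    : Tendsto bxs atTop
        (nhds (WithLp.toLp 2 (fun _ => xdag) : PiLp 2 (fun _ : Fin N => X))) :=
  embedded_landweber_kaczmarz_exact_data_convergence_minimal_distance_general F F' x₀ ρ hscal η hη
    htcc bF hbF bF' hbF' D hD lam hlam hlamD G hG ε hεmono hεnonneg hεlim τ y hex xdag hdagsol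
    hdagmin hkern ybar hybar bxs bxh hbxs0 hhalf hfull
end
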